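/- arXiv:2210.06899 — 3 statements merged into one kernel-verified Lean document; each statement's English description precedes it below -/
import Mathlib

section
/- Let P ⊆ {3,4,5,…,∞} with ∞ ∈ P and let A, B ∈ 𝓕_P. Then there exist C ∈ 𝓕_P and epimorphisms f : C → A and g : C → B belonging to 𝓕_P (the joint projection property for 𝓕_P). -/
open SimpleGraph

namespace PF

/-! ### Basic graph notions (graphs are simple graphs; the reflexive edge relation
of the paper corresponds to `G.Adj x y ∨ x = y`). -/

/-- The order of a vertex: its number of neighbours, which for a finite tree equals
the number of connected components of the complement of the vertex. -/
noncomputable def ord {V : Type*} (T : SimpleGraph V) (a : V) : ℕ :=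
  Nat.card (T.neighborSet a)

/-- The graph obtained by deleting the vertex `a`. -/
def del {V : Type*} (T : SimpleGraph V) (a : V) : SimpleGraph {x : V // x ≠ a} :=
  SimpleGraph.comap Subtype.val T

/-- `x` and `y` are vertices different from `a` lying in the same connected component
of `T ∖ {a}`. -/
def SameComp {V : Type*} (T : SimpleGraph V) (a x y : V) : Prop :=
  ∃ (hx : x ≠ a) (hy : y ≠ a), (del T a).Reachable ⟨x, hx⟩ ⟨y, hy⟩

/-- Epimorphism of graphs (in the reflexive convention of the paper): a vertex surjection
such that a (nontrivial) edge is present in the codomain iff it is witnessed by an edge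
between the fibers. -/
def IsEpi {V W : Type*} (B : SimpleGraph W) (A : SimpleGraph V) (f : W → V) : Prop :=
  Function.Surjective f ∧
    ∀ a a' : V, A.Adj a a' ↔ (a ≠ a' ∧ ∃ b b', f b = a ∧ f b' = a' ∧ B.Adj b b')

/-- A map is monotone if every fiber induces a connected subgraph. -/
def IsMonotone {V W : Type*} (B : SimpleGraph W) (f : W → V) : Prop :=
  ∀ a : V, (SimpleGraph.comap (Subtype.val : (f ⁻¹' {a}) → W) B).Connected

/-- `b` witnesses the weak coherence of `f : B → A` at `a`: `b` is in the fiber of `a`,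
has order at least that of `a`, and the assignment sending a connected component of
`A ∖ {a}` to the connected component of `B ∖ {b}` containing its preimage is a
well-defined injection. -/
def IsWeakWitness {V W : Type*} (A : SimpleGraph V) (B : SimpleGraph W)
    (f : W → V) (a : V) (b : W) : Prop :=
  f b = a ∧ ord A a ≤ ord B b ∧
    ∀ x y : W, f x ≠ a → f y ≠ a →
      (SameComp A a (f x) (f y) ↔ SameComp B b x y)

/-- `b` witnesses the coherence of `f : B → A` at `a`: weak coherence where moreover
`b` has the same order as `a` (so the induced injection between components is a bijection). -/
def IsCohWitness {V W : Type*} (A : SimpleGraph V) (B : SimpleGraph W)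
    (f : W → V) (a : V) (b : W) : Prop :=
  IsWeakWitness A B f a b ∧ ord B b = ord A a

/-- `f : B → A` is weakly coherent: every ramification point of `A` is a point of
weak coherence for `f`. -/
def WeaklyCoherent {V W : Type*} (A : SimpleGraph V) (B : SimpleGraph W) (f : W → V) : Prop :=
  ∀ a : V, 3 ≤ ord A a → ∃ b, IsWeakWitness A B f a b

/-- `f : B → A` is coherent: every ramification point of `A` is a point of coherence for `f`. -/
def Coherent {V W : Type*} (A : SimpleGraph V) (B : SimpleGraph W) (f : W → V) : Prop :=
  ∀ a : V, 3 ≤ ord A a → ∃ b, IsCohWitness A B f a b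

/-! ### The families `𝓕_P` and `𝓖_P` -/

/-- Membership in the family `𝓕_P`: a finite tree with no vertex of order 2. -/
def MemF {V : Type*} (A : SimpleGraph V) : Prop :=
  A.IsTree ∧ ∀ a : V, ord A a ≠ 2

/-- Epimorphisms of the family `𝓕_P` (for `P ⊆ {3,4,…,∞}`, `∞ = ⊤ ∈ P`): monotone
epimorphisms, coherent at points of order in `P`, and weakly coherent at all other
ramification points with a witness of order not in `P`. -/
def EpiF (P : Set ℕ∞) {V W : Type*} (A : SimpleGraph V) (B : SimpleGraph W) (f : W → V) : Prop :=
  IsEpi B A f ∧ IsMonotone B f ∧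
    (∀ a : V, (ord A a : ℕ∞) ∈ P → ∃ b, IsCohWitness A B f a b) ∧
    (∀ a : V, 3 ≤ ord A a → (ord A a : ℕ∞) ∉ P →
      ∃ b, IsWeakWitness A B f a b ∧ (ord B b : ℕ∞) ∉ P)

/-- Membership in the family `𝓖_P`: a finite tree all of whose vertices are endpoints
or have order in `P`. -/
def MemG (P : Set ℕ∞) {V : Type*} (A : SimpleGraph V) : Prop :=
  A.IsTree ∧ ∀ a : V, ord A a ≤ 1 ∨ (ord A a : ℕ∞) ∈ P

/-- Epimorphisms of the family `𝓖_P`: coherent monotone epimorphisms. -/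
def EpiG {V W : Type*} (A : SimpleGraph V) (B : SimpleGraph W) (f : W → V) : Prop :=
  IsEpi B A f ∧ IsMonotone B f ∧ Coherent A B f

/-! ### Projective Fraïssé families of finite graphs -/

/-- A finite graph, on a vertex set `Fin n`.  (Since every finite graph is isomorphic
to one of this form, a family of such graphs automatically has only countably many
isomorphism types.) -/
structure FGraph where
  card : ℕ
  graph : SimpleGraph (Fin card)

/-- A class of finite graphs together with a distinguished class of epimorphisms:
`mor A B f` means that `f` is a distinguished epimorphism from `B` onto `A`. -/
structure Family where
  obj : FGraph → Prop
  mor : ∀ A B : FGraph, (Fin B.card → Fin A.card) → Prop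

/-- `T` is a projective Fraïssé family. -/
structure IsPFF (T : Family) : Prop where
  mor_obj : ∀ A B f, T.mor A B f → T.obj A ∧ T.obj B
  mor_epi : ∀ A B f, T.mor A B f → IsEpi B.graph A.graph f
  id_mem : ∀ A, T.obj A → T.mor A A id
  comp_mem : ∀ A B C f g, T.mor A B f → T.mor B C g → T.mor A C (f ∘ g)
  jpp : ∀ A B, T.obj A → T.obj B → ∃ C f g, T.mor A C f ∧ T.mor B C g
  amalg : ∀ A B C f g, T.mor A B f → T.mor A C g →
    ∃ D h k, T.mor B D h ∧ T.mor C D k ∧ f ∘ h = g ∘ k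

/-- An inverse sequence in the family `T`. -/
structure FSeq (T : Family) where
  F : ℕ → FGraph
  bond : ∀ m n, n ≤ m → Fin (F m).card → Fin (F n).card
  bond_refl : ∀ n x, bond n n le_rfl x = x
  bond_comp : ∀ k m n (h1 : n ≤ m) (h2 : m ≤ k) x,
    bond m n h1 (bond k m h2 x) = bond k n (h1.trans h2) x
  bond_mor : ∀ m n (h : n ≤ m), T.mor (F n) (F m) (bond m n h)

/-- A Fraïssé sequence for the family `T`. -/
structure IsFraisseSeq (T : Family) (S : FSeq T) : Prop where
  proj : ∀ A, T.obj A → ∃ n f, T.mor A (S.F n) f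
  extend : ∀ n (A : FGraph) (f : Fin A.card → Fin (S.F n).card), T.mor (S.F n) A f →
    ∃ (m : ℕ) (h : n ≤ m) (g : Fin (S.F m).card → Fin A.card),
      T.mor A (S.F m) g ∧ f ∘ g = S.bond m n h

/-- The projective Fraïssé limit of a sequence: the inverse limit of the sequence,
as a closed subspace of the product of the (discrete) finite vertex sets. -/
def Limit {T : Family} (S : FSeq T) : Type :=
  {x : ∀ n, Fin (S.F n).card // ∀ m n (h : n ≤ m), S.bond m n h (x m) = x n}

instance {T : Family} (S : FSeq T) : TopologicalSpace (Limit S) := by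
  unfold Limit; infer_instance

/-- The (reflexive) edge relation of the limit. -/
def EdgeRel {T : Family} (S : FSeq T) (x y : Limit S) : Prop :=
  ∀ n, x.1 n = y.1 n ∨ (S.F n).graph.Adj (x.1 n) (y.1 n)

/-- The simple graph on the limit determined by the nontrivial edges. -/
def limitGraph {T : Family} (S : FSeq T) : SimpleGraph (Limit S) where
  Adj x y := x ≠ y ∧ EdgeRel S x y
  symm := by
    refine ⟨?_⟩
    intro x y h
    exact ⟨h.1.symm, fun n => (h.2 n).imp Eq.symm SimpleGraph.Adj.symm⟩
  loopless := ⟨fun x h => h.1 rfl⟩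

/-- The topological realization of the limit: the quotient by the edge relation. -/
def Realization {T : Family} (S : FSeq T) : Type := Quot (EdgeRel S)

/-- The quotient map onto the topological realization. -/
def realMap {T : Family} (S : FSeq T) : Limit S → Realization S := Quot.mk _

instance {T : Family} (S : FSeq T) : TopologicalSpace (Realization S) := by
  unfold Realization; infer_instance

/-! ### Splitting edges -/

/-- The graph obtained from `A` by splitting the edge `⟨a,b⟩`: a new vertex `∗` is added,
the edge `⟨a,b⟩` is removed and replaced by the edges `⟨a,∗⟩` and `⟨∗,b⟩`. -/
def splitGraph {k : ℕ} (A : SimpleGraph (Fin k)) (a b : Fin k) : SimpleGraph (Fin (k + 1)) :=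
  SimpleGraph.fromRel fun x y =>
    (∃ x' y' : Fin k, x = x'.castSucc ∧ y = y'.castSucc ∧ A.Adj x' y' ∧
      ¬(x' = a ∧ y' = b) ∧ ¬(x' = b ∧ y' = a)) ∨
    (x = Fin.last k ∧ (y = a.castSucc ∨ y = b.castSucc))

/-- The map collapsing the new vertex `∗` of the split graph to the vertex `c`. -/
def splitMap {k : ℕ} (c : Fin k) : Fin (k + 1) → Fin k :=
  fun x => Fin.lastCases c (fun y => y) x

/-- A family allows splitting edges if it is closed under splitting an edge, together
with the two maps collapsing the new vertex to either endpoint of the split edge. -/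
def AllowsSplitting (T : Family) : Prop :=
  ∀ (A : FGraph) (a b : Fin A.card), T.obj A → A.graph.Adj a b →
    T.obj ⟨A.card + 1, splitGraph A.graph a b⟩ ∧
    T.mor A ⟨A.card + 1, splitGraph A.graph a b⟩ (splitMap a) ∧
    T.mor A ⟨A.card + 1, splitGraph A.graph a b⟩ (splitMap b)

/-! ### Points of weak coherence in the limit -/

/-- A point of the limit is a point of weak coherence if from some index on, each
coordinate is a point of weak coherence of the bonding map from the next level,
witnessed by the next coordinate. -/
def LimitWeakCohPoint {T : Family} (S : FSeq T) (x : Limit S) : Prop :=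
  ∃ k : ℕ, ∀ l, k ≤ l →
    3 ≤ ord (S.F l).graph (x.1 l) ∧
    IsWeakWitness (S.F l).graph (S.F (l + 1)).graph
      (S.bond (l + 1) l (Nat.le_succ l)) (x.1 l) (x.1 (l + 1))

/-! ### Topological notions: number of branches at a point, dendrites, arcs -/

/-- The order of a point of a topological space: the number (in `ℕ∞`) of connected
components of the complement of the point. -/
noncomputable def ordAt (X : Type*) [TopologicalSpace X] (x : X) : ℕ∞ :=
  ENat.card (ConnectedComponents {y : X // y ≠ x})

/-- `A` is an arc in `X` from `x` to `y`: the image of a continuous injection of the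
unit interval sending `0` to `x` and `1` to `y`. -/
def IsArcSet {X : Type*} [TopologicalSpace X] (A : Set X) (x y : X) : Prop :=
  ∃ f : unitInterval → X, Continuous f ∧ Function.Injective f ∧
    Set.range f = A ∧ f 0 = x ∧ f 1 = y

/-- A dendrite: a nondegenerate compact connected locally connected metrizable space in
which every two distinct points are joined by a unique arc. -/
def IsDendrite (X : Type*) [TopologicalSpace X] : Prop :=
  Nontrivial X ∧ CompactSpace X ∧ ConnectedSpace X ∧ LocallyConnectedSpace X ∧
    TopologicalSpace.MetrizableSpace X ∧
    ∀ x y : X, x ≠ y → ∃! A : Set X, IsArcSet A x y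

/-- A set is arcwise dense if every arc with distinct endpoints meets it. -/
def ArcwiseDense {X : Type*} [TopologicalSpace X] (s : Set X) : Prop :=
  ∀ x y : X, x ≠ y → ∀ A : Set X, IsArcSet A x y → ∃ z ∈ s, z ∈ A

/-! ### Topological graphs, graph-arcs and endpoints -/

/-- A topological graph: a compact Hausdorff zero-dimensional second countable space
with a closed (reflexive) edge relation. -/
def IsTopGraph (X : Type*) [TopologicalSpace X] (G : SimpleGraph X) : Prop :=
  CompactSpace X ∧ T2Space X ∧ TotallyDisconnectedSpace X ∧
    SecondCountableTopology X ∧ IsClosed {p : X × X | G.Adj p.1 p.2 ∨ p.1 = p.2}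

/-- Connectedness of a topological graph: there is no partition of the vertex set into
two nonempty disjoint closed sets with no edge between them. -/
def GraphConn (X : Type*) [TopologicalSpace X] (G : SimpleGraph X) : Prop :=
  ¬ ∃ s t : Set X, IsClosed s ∧ IsClosed t ∧ s.Nonempty ∧ t.Nonempty ∧
      Disjoint s t ∧ s ∪ t = Set.univ ∧ ∀ a ∈ s, ∀ b ∈ t, ¬ G.Adj a b

/-- The topological graph obtained by deleting the vertex `a` remains connected. -/
def GraphConnDel (X : Type*) [TopologicalSpace X] (G : SimpleGraph X) (a : X) : Prop :=
  GraphConn {v : X // v ≠ a} (G.comap Subtype.val)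

/-- A topological graph is an arc if it is connected and all but at most two of its
vertices disconnect it when removed. -/
def IsArcGraph (X : Type*) [TopologicalSpace X] (G : SimpleGraph X) : Prop :=
  GraphConn X G ∧ ∃ e : Set X, (∃ u v : X, e ⊆ {u, v}) ∧
    ∀ a : X, a ∉ e → ¬ GraphConnDel X G a

/-- An endpoint of a topological graph which is an arc: a vertex whose removal does not
disconnect it. -/
def ArcEndpoint (X : Type*) [TopologicalSpace X] (G : SimpleGraph X) (a : X) : Prop :=
  GraphConnDel X G a

/-- `x` is an endpoint of the topological graph `Gr` on `Y`: whenever a topological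
graph which is an arc embeds into `Gr` with `x` in the image, `x` is the image of an
endpoint of the arc. -/
def GraphEndpoint (Y : Type*) [TopologicalSpace Y] (Gr : SimpleGraph Y) (x : Y) : Prop :=
  ∀ (X : Type) [TopologicalSpace X] (H : SimpleGraph X), IsTopGraph X H → IsArcGraph X H →
    ∀ h : X → Y, Function.Injective h →
      (‹TopologicalSpace X› = TopologicalSpace.induced h inferInstance) →
      (∀ a b : X, H.Adj a b ↔ Gr.Adj (h a) (h b)) →
      x ∈ Set.range h → ∃ e : X, ArcEndpoint X H e ∧ h e = x

/-! ### Betweenness and immersions in finite trees -/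

/-- `y` lies between `x` and `z`: every walk from `x` to `z` passes through `y`
(in a tree, this says exactly that `y` lies on the unique path from `x` to `z`). -/
def Between {V : Type*} (T : SimpleGraph V) (x y z : V) : Prop :=
  ∀ p : T.Walk x z, y ∈ p.support

/-- An immersion of `A` into `B`: a map preserving and reflecting betweenness of
pairwise distinct vertices. -/
def IsImmersion {V W : Type*} (A : SimpleGraph V) (B : SimpleGraph W) (i : V → W) : Prop :=
  ∀ a b c : V, a ≠ b → b ≠ c → a ≠ c →
    (Between A a b c ↔ Between B (i a) (i b) (i c))

/-! ### The families `𝓖_P` and `𝓕_P` as families of finite graphs -/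

/-- The family `𝓖_P` as a family of finite graphs with distinguished epimorphisms. -/
def familyG (P : Set ℕ∞) : Family where
  obj A := MemG P A.graph
  mor A B f := MemG P A.graph ∧ MemG P B.graph ∧ EpiG A.graph B.graph f

/-- The family `𝓕_P` as a family of finite graphs with distinguished epimorphisms. -/
def familyF (P : Set ℕ∞) : Family where
  obj A := MemF A.graph
  mor A B f := MemF A.graph ∧ MemF B.graph ∧ EpiF P A.graph B.graph f

end PF

namespace JPP
open PF

lemma reach_collapse {V W : Type*} {G : SimpleGraph V} {H : SimpleGraph W} (F : V → W)
    (h : ∀ a b, G.Adj a b → H.Adj (F a) (F b) ∨ F a = F b) {x y : V}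
    (hr : G.Reachable x y) : H.Reachable (F x) (F y) := by
  obtain ⟨p⟩ := hr
  induction p with
  | nil => exact Reachable.refl _
  | cons ha p ih =>
      rcases h _ _ ha with h' | h'
      · exact (h'.reachable).trans ih
      · rw [h']; exact ih

lemma bot_reach {W : Type*} {x y : W} (h : (⊥ : SimpleGraph W).Reachable x y) : x = y := by
  obtain ⟨p⟩ := h
  cases p with
  | nil => rfl
  | cons ha _ => exact ha.elim

lemma no_reach_side {γ W : Type*} (G : SimpleGraph γ) (x y : γ) (F : γ → W)
    (h : ∀ z w, G.Adj z w → s(z,w) ≠ s(x,y) → F z = F w) (hne : F x ≠ F y) :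
    ¬ (G \ fromEdgeSet {s(x,y)}).Reachable x y := by
  intro hr
  apply hne
  refine bot_reach (W := W) (reach_collapse F ?_ hr)
  intro z w hzw
  rw [sdiff_adj, fromEdgeSet_adj] at hzw
  obtain ⟨hzw, hns⟩ := hzw
  right
  exact h z w hzw (fun he => hns ⟨by simp [he], hzw.ne⟩)

lemma no_reach_collapse {γ V : Type*} (G : SimpleGraph γ) (H : SimpleGraph V) (x y : γ) (F : γ → V)
    (h : ∀ z w, G.Adj z w → s(z,w) ≠ s(x,y) →
      (H \ fromEdgeSet {s(F x, F y)}).Adj (F z) (F w) ∨ F z = F w)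
    (hH : ¬ (H \ fromEdgeSet {s(F x, F y)}).Reachable (F x) (F y)) :
    ¬ (G \ fromEdgeSet {s(x,y)}).Reachable x y := by
  intro hr
  apply hH
  refine reach_collapse F ?_ hr
  intro z w hzw
  rw [sdiff_adj, fromEdgeSet_adj] at hzw
  obtain ⟨hzw, hns⟩ := hzw
  exact h z w hzw (fun he => hns ⟨by simp [he], hzw.ne⟩)

lemma ord_eq_ncard {V : Type*} (T : SimpleGraph V) (a : V) :
    ord T a = (T.neighborSet a).ncard := Nat.card_coe_set_eq _

lemma ord_zero_of_subsingleton {V : Type*} [Subsingleton V] (A : SimpleGraph V) (a : V) :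
    ord A a = 0 := by
  have : A.neighborSet a = ∅ := by
    ext x
    simp only [mem_neighborSet, Set.mem_empty_iff_false, iff_false]
    intro h
    exact h.ne (Subsingleton.elim a x)
  rw [ord_eq_ncard, this, Set.ncard_empty]

lemma isCohWitness_id {V : Type*} (A : SimpleGraph V) (a : V) :
    IsCohWitness A A id a a :=
  ⟨⟨rfl, le_rfl, fun _ _ _ _ => Iff.rfl⟩, rfl⟩

lemma epiF_id (P : Set ℕ∞) {V : Type*} (A : SimpleGraph V) : EpiF P A A id := by
  refine ⟨⟨Function.surjective_id, ?_⟩, ?_, ?_, ?_⟩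
  · intro a a'
    constructor
    · intro h; exact ⟨h.ne, a, a', rfl, rfl, h⟩
    · rintro ⟨hne, b, b', rfl, rfl, h⟩; exact h
  · intro a
    haveI : Nonempty {x // x ∈ (id : V → V) ⁻¹' {a}} := ⟨⟨a, rfl⟩⟩
    refine SimpleGraph.Connected.mk fun x y => ?_
    have hxy : x = y := Subtype.ext (x.2.trans y.2.symm)
    rw [hxy]
  · intro a _
    exact ⟨a, isCohWitness_id A a⟩
  · intro a _ hnP
    exact ⟨a, (isCohWitness_id A a).1, hnP⟩

lemma epiF_const (P : Set ℕ∞) (hP : ∀ p ∈ P, 3 ≤ p) {V W : Type*} [Subsingleton V]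
    (A : SimpleGraph V) (B : SimpleGraph W) (hB : B.Connected) (a : V) :
    EpiF P A B (fun _ => a) := by
  obtain ⟨w₀⟩ := hB.nonempty
  have hord : ∀ a' : V, ord A a' = 0 := ord_zero_of_subsingleton A
  refine ⟨⟨fun a' => ⟨w₀, Subsingleton.elim a a'⟩, ?_⟩, ?_, ?_, ?_⟩
  · intro x y
    constructor
    · intro h; exact absurd (Subsingleton.elim x y) h.ne
    · rintro ⟨hne, _⟩; exact absurd (Subsingleton.elim x y) hne
  · intro a'
    haveI : Nonempty {x // x ∈ (fun (_ : W) => a) ⁻¹' {a'}} := ⟨⟨w₀, Subsingleton.elim a a'⟩⟩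
    refine SimpleGraph.Connected.mk fun x y => ?_
    have := reach_collapse (G := B)
      (H := B.comap (Subtype.val : ((fun (_ : W) => a) ⁻¹' {a'}) → W))
      (fun z => ⟨z, x.2⟩) (fun _ _ h => Or.inl h) (hB.preconnected x.1 y.1)
    exact this
  · intro a' ha'
    exfalso
    have := hP _ ha'
    rw [hord a'] at this
    simp at this
  · intro a' h3 _
    rw [hord a'] at h3
    omega

lemma exists_leaf {V : Type*} [Fintype V] {A : SimpleGraph V} (hA : A.IsTree)
    (hV : Nontrivial V) : ∃ a, ord A a = 1 := by
  classical
  have hdeg : ∀ a, ord A a = A.degree a := by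
    intro a
    rw [ord, Nat.card_eq_fintype_card, card_neighborSet_eq_degree]
  have hsum : ∑ v, A.degree v = 2 * (Fintype.card V - 1) := by
    rw [sum_degrees_eq_twice_card_edges]
    have := hA.card_edgeFinset
    omega
  have hcard : 2 ≤ Fintype.card V := Fintype.one_lt_card
  have hex : ∃ a, A.degree a ≤ 1 := by
    by_contra h
    push_neg at h
    have h2 : ∑ _v : V, 2 ≤ ∑ v, A.degree v := Finset.sum_le_sum (fun i _ => h i)
    rw [Finset.sum_const, Finset.card_univ, smul_eq_mul] at h2
    omega
  obtain ⟨a, ha1⟩ := hex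
  obtain ⟨b, hb⟩ := exists_ne a
  obtain ⟨p⟩ := hA.isConnected a b
  have hpos : 0 < A.degree a := by
    cases p with
    | nil => exact absurd rfl hb
    | cons h q => exact (degree_pos_iff_exists_adj A a).2 ⟨_, h⟩
  exact ⟨a, by rw [hdeg]; omega⟩

lemma epiF_glue (P : Set ℕ∞) (hP : ∀ p ∈ P, 3 ≤ p)
    {α γ : Type*} (A : SimpleGraph α) (C : SimpleGraph γ)
    (e : α → γ) (a₀ : α) (f : γ → α)
    (he : Function.Injective e)
    (hfe : ∀ u, f (e u) = u)
    (hf0 : ∀ x, x ∉ Set.range e → f x = a₀)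
    (hadj : ∀ u v, C.Adj (e u) (e v) ↔ A.Adj u v)
    (hcross : ∀ u x, C.Adj (e u) x → x ∈ Set.range e ∨ u = a₀)
    (hblob : ∀ x (hx : x ∉ Set.range e),
      (C.comap (Subtype.val : {z : γ // z = e a₀ ∨ z ∉ Set.range e} → γ)).Reachable
        ⟨x, Or.inr hx⟩ ⟨e a₀, Or.inl rfl⟩)
    (ha₀ : ord A a₀ ≤ 1) :
    EpiF P A C f := by
  -- basic facts
  have fmem : ∀ {x a}, f x = a → (x = e a ∨ (x ∉ Set.range e ∧ a = a₀)) := by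
    intro x a hxa
    by_cases hx : x ∈ Set.range e
    · obtain ⟨u, rfl⟩ := hx
      left; rw [← hxa, hfe]
    · right; refine ⟨hx, ?_⟩; rw [← hxa, hf0 x hx]
  have hxe : ∀ {x a}, f x ≠ a → x ≠ e a := by
    intro x a h hx; exact h (hx ▸ hfe a)
  have nbr : ∀ u, u ≠ a₀ → C.neighborSet (e u) = e '' A.neighborSet u := by
    intro u hu
    ext x
    simp only [mem_neighborSet, Set.mem_image]
    constructor
    · intro hx
      rcases hcross u x hx with ⟨v, rfl⟩ | h
      · exact ⟨v, (hadj u v).1 hx, rfl⟩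
      · exact absurd h hu
    · rintro ⟨v, hv, rfl⟩
      exact (hadj u v).2 hv
  have ordeq : ∀ u, u ≠ a₀ → ord C (e u) = ord A u := by
    intro u hu
    rw [ord_eq_ncard, ord_eq_ncard, nbr u hu, Set.ncard_image_of_injective _ he]
  -- coherence
  have coh : ∀ a, 3 ≤ ord A a → IsCohWitness A C f a (e a) := by
    intro a h3
    have hne : a ≠ a₀ := fun h => by rw [h] at h3; omega
    have horde : ord C (e a) = ord A a := ordeq a hne
    refine ⟨⟨hfe a, horde.ge, ?_⟩, horde⟩
    intro x y hx hy
    constructor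
    · rintro ⟨h1, h2, hr⟩
      -- lift the A-path
      have stepA : (del C (e a)).Reachable ⟨e (f x), fun h => h1 (he h)⟩
          ⟨e (f y), fun h => h2 (he h)⟩ := by
        refine reach_collapse
          (fun (u : {u : α // u ≠ a}) => (⟨e u.1, fun h => u.2 (he h)⟩ : {z : γ // z ≠ e a}))
          ?_ hr
        intro u v huv
        exact Or.inl ((hadj u.1 v.1).2 huv)
      have stepB : ∀ (x : γ) (hx : f x ≠ a),
          (del C (e a)).Reachable ⟨x, hxe hx⟩ ⟨e (f x), fun h => hx (he h)⟩ := by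
        intro x hx
        by_cases hxr : x ∈ Set.range e
        · obtain ⟨u, rfl⟩ := hxr
          simp only [hfe]
          exact Reachable.refl _
        · have hreach := hblob x hxr
          have hfx : f x = a₀ := hf0 x hxr
          have := reach_collapse (H := del C (e a))
            (fun (z : {z : γ // z = e a₀ ∨ z ∉ Set.range e}) =>
              (⟨z.1, by
                rcases z.2 with h | h
                · rw [h]; exact fun hh => hne (he hh).symm
                · exact fun hh => h ⟨a, hh.symm⟩⟩ : {z : γ // z ≠ e a}))
            (fun u v huv => Or.inl huv) hreach
          simp only [hfx]
          exact this
      exact ⟨hxe hx, hxe hy, ((stepB x hx).trans stepA).trans (stepB y hy).symm⟩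
    · rintro ⟨hx', hy', hr⟩
      have key := reach_collapse (H := del A a)
        (fun (z : {z : γ // z ≠ e a}) =>
          (⟨f z.1, by
            intro h
            rcases fmem h with h' | ⟨_, h'⟩
            · exact z.2 h'
            · exact hne h'⟩ : {u : α // u ≠ a}))
        ?_ hr
      · exact ⟨hx, hy, key⟩
      · rintro ⟨z, hz⟩ ⟨w, hw⟩ hzw
        change C.Adj z w at hzw
        by_cases hzr : z ∈ Set.range e
        · obtain ⟨u, rfl⟩ := hzr
          by_cases hwr : w ∈ Set.range e
          · obtain ⟨v, rfl⟩ := hwr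
            left
            change A.Adj (f (e u)) (f (e v))
            rw [hfe, hfe]
            exact (hadj u v).1 hzw
          · rcases hcross u w hzw with h | h
            · exact absurd h hwr
            · right
              apply Subtype.ext
              change f (e u) = f w
              rw [hfe, hf0 w hwr, h]
        · by_cases hwr : w ∈ Set.range e
          · obtain ⟨v, rfl⟩ := hwr
            rcases hcross v z hzw.symm with h | h
            · exact absurd h hzr
            · right
              apply Subtype.ext
              change f z = f (e v)
              rw [hfe, hf0 z hzr, h]
          · right
            apply Subtype.ext
            change f z = f w
            rw [hf0 z hzr, hf0 w hwr]
  -- assemble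
  refine ⟨⟨fun a => ⟨e a, hfe a⟩, ?_⟩, ?_, ?_, ?_⟩
  · intro a a'
    constructor
    · intro h
      exact ⟨h.ne, e a, e a', hfe a, hfe a', (hadj a a').2 h⟩
    · rintro ⟨hne, b, b', hb, hb', hbb'⟩
      rcases fmem hb with rfl | ⟨hbr, rfl⟩
      · rcases fmem hb' with rfl | ⟨hbr', rfl⟩
        · exact (hadj a a').1 hbb'
        · rcases hcross a b' hbb' with h | h
          · exact absurd h hbr'
          · exact absurd h (by rintro rfl; exact hne rfl)
      · rcases fmem hb' with rfl | ⟨hbr', rfl⟩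
        · rcases hcross a' b hbb'.symm with h | h
          · exact absurd h hbr
          · exact absurd h.symm hne
        · exact absurd rfl hne
  · intro a
    by_cases haa : a = a₀
    · subst haa
      haveI : Nonempty {x // x ∈ f ⁻¹' {a}} := ⟨⟨e a, hfe a⟩⟩
      refine SimpleGraph.Connected.mk fun x y => ?_
      have toe : ∀ (z : γ) (hz : z ∈ f ⁻¹' {a}),
          (C.comap (Subtype.val : (f ⁻¹' {a}) → γ)).Reachable ⟨z, hz⟩ ⟨e a, hfe a⟩ := by
        intro z hz
        by_cases hzr : z ∈ Set.range e
        · obtain ⟨u, rfl⟩ := hzr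
          have : u = a := by rw [← hfe u]; exact hz
          subst this
          exact Reachable.refl _
        · have := reach_collapse (H := C.comap (Subtype.val : (f ⁻¹' {a}) → γ))
            (fun (w : {w : γ // w = e a ∨ w ∉ Set.range e}) =>
              (⟨w.1, by
                rcases w.2 with h | h
                · rw [h]; exact hfe a
                · exact hf0 w.1 h⟩ : {w : γ // w ∈ f ⁻¹' {a}}))
            (fun u v huv => Or.inl huv) (hblob z hzr)
          exact this
      exact (toe x.1 x.2).trans (toe y.1 y.2).symm
    · haveI : Nonempty {x // x ∈ f ⁻¹' {a}} := ⟨⟨e a, hfe a⟩⟩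
      refine SimpleGraph.Connected.mk fun x y => ?_
      have hx : x.1 = e a := by
        rcases fmem x.2 with h | ⟨_, h⟩
        · exact h
        · exact absurd h haa
      have hy : y.1 = e a := by
        rcases fmem y.2 with h | ⟨_, h⟩
        · exact h
        · exact absurd h haa
      have : x = y := Subtype.ext (hx.trans hy.symm)
      rw [this]
  · intro a haP
    have h3 : 3 ≤ ord A a := by exact_mod_cast hP _ haP
    exact ⟨e a, coh a h3⟩
  · intro a h3 hnP
    refine ⟨e a, (coh a h3).1, ?_⟩
    rw [(coh a h3).2]
    exact hnP

section GlueSec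

variable {α β : Type*}

/-- The tree obtained by joining `A` and `B` with an edge between `a₀` and `b₀`,
and adding extra leaves at `a₀` and `b₀`. -/
def glue (A : SimpleGraph α) (B : SimpleGraph β) (a₀ : α) (b₀ : β) :
    SimpleGraph ((α ⊕ Unit) ⊕ (β ⊕ Unit)) :=
  SimpleGraph.fromRel (fun x y =>
    (∃ u v, x = Sum.inl (Sum.inl u) ∧ y = Sum.inl (Sum.inl v) ∧ A.Adj u v) ∨
    (∃ u v, x = Sum.inr (Sum.inl u) ∧ y = Sum.inr (Sum.inl v) ∧ B.Adj u v) ∨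
    (x = Sum.inl (Sum.inl a₀) ∧ y = Sum.inr (Sum.inl b₀)) ∨
    (x = Sum.inl (Sum.inl a₀) ∧ y = Sum.inl (Sum.inr ())) ∨
    (x = Sum.inr (Sum.inl b₀) ∧ y = Sum.inr (Sum.inr ())))

def fA (a₀ : α) : (α ⊕ Unit) ⊕ (β ⊕ Unit) → α := fun x =>
  match x with
  | Sum.inl (Sum.inl u) => u
  | _ => a₀

def fB (b₀ : β) : (α ⊕ Unit) ⊕ (β ⊕ Unit) → β := fun x =>
  match x with
  | Sum.inr (Sum.inl v) => v
  | _ => b₀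

variable {A : SimpleGraph α} {B : SimpleGraph β} {a₀ : α} {b₀ : β}

lemma glue_adj {x y : (α ⊕ Unit) ⊕ (β ⊕ Unit)} :
    (glue A B a₀ b₀).Adj x y ↔
      (∃ u v, x = Sum.inl (Sum.inl u) ∧ y = Sum.inl (Sum.inl v) ∧ A.Adj u v) ∨
      (∃ u v, x = Sum.inr (Sum.inl u) ∧ y = Sum.inr (Sum.inl v) ∧ B.Adj u v) ∨
      (x = Sum.inl (Sum.inl a₀) ∧ y = Sum.inr (Sum.inl b₀)) ∨
      (x = Sum.inr (Sum.inl b₀) ∧ y = Sum.inl (Sum.inl a₀)) ∨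
      (x = Sum.inl (Sum.inl a₀) ∧ y = Sum.inl (Sum.inr ())) ∨
      (x = Sum.inl (Sum.inr ()) ∧ y = Sum.inl (Sum.inl a₀)) ∨
      (x = Sum.inr (Sum.inl b₀) ∧ y = Sum.inr (Sum.inr ())) ∨
      (x = Sum.inr (Sum.inr ()) ∧ y = Sum.inr (Sum.inl b₀)) := by
  rw [glue, fromRel_adj]
  constructor
  · rintro ⟨hne, h | h⟩
    · rcases h with ⟨u,v,rfl,rfl,h⟩|⟨u,v,rfl,rfl,h⟩|⟨rfl,rfl⟩|⟨rfl,rfl⟩|⟨rfl,rfl⟩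
      · exact Or.inl ⟨u,v,rfl,rfl,h⟩
      · exact Or.inr (Or.inl ⟨u,v,rfl,rfl,h⟩)
      · tauto
      · tauto
      · tauto
    · rcases h with ⟨u,v,rfl,rfl,h⟩|⟨u,v,rfl,rfl,h⟩|⟨rfl,rfl⟩|⟨rfl,rfl⟩|⟨rfl,rfl⟩
      · exact Or.inl ⟨v,u,rfl,rfl,h.symm⟩
      · exact Or.inr (Or.inl ⟨v,u,rfl,rfl,h.symm⟩)
      · tauto
      · tauto
      · tauto
  · rintro (⟨u,v,rfl,rfl,h⟩|⟨u,v,rfl,rfl,h⟩|⟨rfl,rfl⟩|⟨rfl,rfl⟩|⟨rfl,rfl⟩|⟨rfl,rfl⟩|⟨rfl,rfl⟩|⟨rfl,rfl⟩)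
    · exact ⟨by simpa using h.ne, Or.inl (Or.inl ⟨u,v,rfl,rfl,h⟩)⟩
    · exact ⟨by simpa using h.ne, Or.inl (Or.inr (Or.inl ⟨u,v,rfl,rfl,h⟩))⟩
    · exact ⟨by simp, Or.inl (by tauto)⟩
    · exact ⟨by simp, Or.inr (by tauto)⟩
    · exact ⟨by simp, Or.inl (by tauto)⟩
    · exact ⟨by simp, Or.inr (by tauto)⟩
    · exact ⟨by simp, Or.inl (by tauto)⟩
    · exact ⟨by simp, Or.inr (by tauto)⟩

end GlueSec

section MainSec

variable {α β : Type*} {A : SimpleGraph α} {B : SimpleGraph β} {a₀ : α} {b₀ : β}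

lemma injA : Function.Injective (fun u : α => (Sum.inl (Sum.inl u) : (α ⊕ Unit) ⊕ (β ⊕ Unit))) :=
  fun a b h => by simpa using h

lemma injB : Function.Injective (fun v : β => (Sum.inr (Sum.inl v) : (α ⊕ Unit) ⊕ (β ⊕ Unit))) :=
  fun a b h => by simpa using h

lemma glue_connected (hAc : A.Connected) (hBc : B.Connected) :
    (glue A B a₀ b₀).Connected := by
  have hb : (glue A B a₀ b₀).Reachable (Sum.inr (Sum.inl b₀)) (Sum.inl (Sum.inl a₀)) :=
    (glue_adj.mpr (Or.inr (Or.inr (Or.inr (Or.inl ⟨rfl, rfl⟩))))).reachable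
  have hreach : ∀ z : (α ⊕ Unit) ⊕ (β ⊕ Unit),
      (glue A B a₀ b₀).Reachable z (Sum.inl (Sum.inl a₀)) := by
    rintro ((u | u) | (v | u))
    · exact reach_collapse (H := glue A B a₀ b₀)
        (fun u : α => Sum.inl (Sum.inl u))
        (fun u v h => Or.inl (glue_adj.mpr (Or.inl ⟨u, v, rfl, rfl, h⟩)))
        (hAc.preconnected u a₀)
    · cases u
      exact (glue_adj.mpr (Or.inr (Or.inr (Or.inr (Or.inr (Or.inr
        (Or.inl ⟨rfl, rfl⟩))))))).reachable
    · refine Reachable.trans ?_ hb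
      exact reach_collapse (H := glue A B a₀ b₀)
        (fun v : β => Sum.inr (Sum.inl v))
        (fun u v h => Or.inl (glue_adj.mpr (Or.inr (Or.inl ⟨u, v, rfl, rfl, h⟩))))
        (hBc.preconnected v b₀)
    · cases u
      refine Reachable.trans ?_ hb
      exact (glue_adj.mpr (Or.inr (Or.inr (Or.inr (Or.inr (Or.inr (Or.inr
        (Or.inr ⟨rfl, rfl⟩)))))))).reachable
  exact SimpleGraph.Connected.mk fun x y => (hreach x).trans (hreach y).symm

lemma glue_acyclic (hAt : A.IsAcyclic) (hBt : B.IsAcyclic) :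
    (glue A B a₀ b₀).IsAcyclic := by
  rw [isAcyclic_iff_forall_adj_isBridge]
  intro x y hxy
  rw [isBridge_iff]
  change ¬ (glue A B a₀ b₀ \ fromEdgeSet {s(x, y)}).Reachable x y
  rcases glue_adj.mp hxy with ⟨u,v,rfl,rfl,h⟩|⟨u,v,rfl,rfl,h⟩|⟨rfl,rfl⟩|⟨rfl,rfl⟩|⟨rfl,rfl⟩|⟨rfl,rfl⟩|⟨rfl,rfl⟩|⟨rfl,rfl⟩
  · -- A-edge
    refine no_reach_collapse _ A _ _ (fA a₀) ?_
      (isBridge_iff.mp (isAcyclic_iff_forall_adj_isBridge.mp hAt h))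
    rintro z w hzw hs
    rcases glue_adj.mp hzw with ⟨u',v',rfl,rfl,h'⟩|⟨u',v',rfl,rfl,h'⟩|⟨rfl,rfl⟩|⟨rfl,rfl⟩|⟨rfl,rfl⟩|⟨rfl,rfl⟩|⟨rfl,rfl⟩|⟨rfl,rfl⟩
    · refine Or.inl ⟨h', ?_⟩
      rw [fromEdgeSet_adj]
      rintro ⟨hmem, -⟩
      rw [Set.mem_singleton_iff] at hmem
      rcases Sym2.eq_iff.mp hmem with ⟨rfl, rfl⟩ | ⟨rfl, rfl⟩
      · exact hs rfl
      · exact hs Sym2.eq_swap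
    all_goals exact Or.inr rfl
  · -- B-edge
    refine no_reach_collapse _ B _ _ (fB b₀) ?_
      (isBridge_iff.mp (isAcyclic_iff_forall_adj_isBridge.mp hBt h))
    rintro z w hzw hs
    rcases glue_adj.mp hzw with ⟨u',v',rfl,rfl,h'⟩|⟨u',v',rfl,rfl,h'⟩|⟨rfl,rfl⟩|⟨rfl,rfl⟩|⟨rfl,rfl⟩|⟨rfl,rfl⟩|⟨rfl,rfl⟩|⟨rfl,rfl⟩
    · exact Or.inr rfl
    · refine Or.inl ⟨h', ?_⟩
      rw [fromEdgeSet_adj]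
      rintro ⟨hmem, -⟩
      rw [Set.mem_singleton_iff] at hmem
      rcases Sym2.eq_iff.mp hmem with ⟨rfl, rfl⟩ | ⟨rfl, rfl⟩
      · exact hs rfl
      · exact hs Sym2.eq_swap
    all_goals exact Or.inr rfl
  · -- bridge
    refine no_reach_side _ _ _ (Sum.elim (fun _ => false) (fun _ => true)) ?_ (by simp)
    rintro z w hzw hs
    rcases glue_adj.mp hzw with ⟨u',v',rfl,rfl,h'⟩|⟨u',v',rfl,rfl,h'⟩|⟨rfl,rfl⟩|⟨rfl,rfl⟩|⟨rfl,rfl⟩|⟨rfl,rfl⟩|⟨rfl,rfl⟩|⟨rfl,rfl⟩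
    · rfl
    · rfl
    · exact absurd rfl hs
    · exact absurd Sym2.eq_swap hs
    · rfl
    · rfl
    · rfl
    · rfl
  · -- bridge, swapped
    refine no_reach_side _ _ _ (Sum.elim (fun _ => false) (fun _ => true)) ?_ (by simp)
    rintro z w hzw hs
    rcases glue_adj.mp hzw with ⟨u',v',rfl,rfl,h'⟩|⟨u',v',rfl,rfl,h'⟩|⟨rfl,rfl⟩|⟨rfl,rfl⟩|⟨rfl,rfl⟩|⟨rfl,rfl⟩|⟨rfl,rfl⟩|⟨rfl,rfl⟩
    · rfl
    · rfl
    · exact absurd Sym2.eq_swap hs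
    · exact absurd rfl hs
    · rfl
    · rfl
    · rfl
    · rfl
  · -- pendant A
    refine no_reach_side _ _ _
      (Sum.elim (Sum.elim (fun _ => false) (fun _ => true)) (fun _ => false)) ?_ (by simp)
    rintro z w hzw hs
    rcases glue_adj.mp hzw with ⟨u',v',rfl,rfl,h'⟩|⟨u',v',rfl,rfl,h'⟩|⟨rfl,rfl⟩|⟨rfl,rfl⟩|⟨rfl,rfl⟩|⟨rfl,rfl⟩|⟨rfl,rfl⟩|⟨rfl,rfl⟩
    · rfl
    · rfl
    · rfl
    · rfl
    · exact absurd rfl hs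
    · exact absurd Sym2.eq_swap hs
    · rfl
    · rfl
  · -- pendant A, swapped
    refine no_reach_side _ _ _
      (Sum.elim (Sum.elim (fun _ => false) (fun _ => true)) (fun _ => false)) ?_ (by simp)
    rintro z w hzw hs
    rcases glue_adj.mp hzw with ⟨u',v',rfl,rfl,h'⟩|⟨u',v',rfl,rfl,h'⟩|⟨rfl,rfl⟩|⟨rfl,rfl⟩|⟨rfl,rfl⟩|⟨rfl,rfl⟩|⟨rfl,rfl⟩|⟨rfl,rfl⟩
    · rfl
    · rfl
    · rfl
    · rfl
    · exact absurd Sym2.eq_swap hs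
    · exact absurd rfl hs
    · rfl
    · rfl
  · -- pendant B
    refine no_reach_side _ _ _
      (Sum.elim (fun _ => false) (Sum.elim (fun _ => false) (fun _ => true))) ?_ (by simp)
    rintro z w hzw hs
    rcases glue_adj.mp hzw with ⟨u',v',rfl,rfl,h'⟩|⟨u',v',rfl,rfl,h'⟩|⟨rfl,rfl⟩|⟨rfl,rfl⟩|⟨rfl,rfl⟩|⟨rfl,rfl⟩|⟨rfl,rfl⟩|⟨rfl,rfl⟩
    · rfl
    · rfl
    · rfl
    · rfl
    · rfl
    · rfl
    · exact absurd rfl hs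
    · exact absurd Sym2.eq_swap hs
  · -- pendant B, swapped
    refine no_reach_side _ _ _
      (Sum.elim (fun _ => false) (Sum.elim (fun _ => false) (fun _ => true))) ?_ (by simp)
    rintro z w hzw hs
    rcases glue_adj.mp hzw with ⟨u',v',rfl,rfl,h'⟩|⟨u',v',rfl,rfl,h'⟩|⟨rfl,rfl⟩|⟨rfl,rfl⟩|⟨rfl,rfl⟩|⟨rfl,rfl⟩|⟨rfl,rfl⟩|⟨rfl,rfl⟩
    · rfl
    · rfl
    · rfl
    · rfl
    · rfl
    · rfl
    · exact absurd Sym2.eq_swap hs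
    · exact absurd rfl hs

end MainSec

section MainSec2

variable {α β : Type*} {A : SimpleGraph α} {B : SimpleGraph β} {a₀ : α} {b₀ : β}

lemma nbr_eA {u : α} (hu : u ≠ a₀) :
    (glue A B a₀ b₀).neighborSet (Sum.inl (Sum.inl u)) =
      (fun v : α => (Sum.inl (Sum.inl v) : (α ⊕ Unit) ⊕ (β ⊕ Unit))) '' A.neighborSet u := by
  ext x
  simp only [mem_neighborSet, Set.mem_image]
  constructor
  · intro hx
    rcases glue_adj.mp hx with ⟨u',v',h1,rfl,h'⟩|⟨u',v',h1,rfl,h'⟩|⟨h1,rfl⟩|⟨h1,rfl⟩|⟨h1,rfl⟩|⟨h1,rfl⟩|⟨h1,rfl⟩|⟨h1,rfl⟩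
    · obtain rfl : u = u' := by simpa using h1
      exact ⟨v', h', rfl⟩
    · simp at h1
    · exact absurd (by simpa using h1) hu
    · simp at h1
    · exact absurd (by simpa using h1) hu
    · simp at h1
    · simp at h1
    · simp at h1
  · rintro ⟨v, hv, rfl⟩
    exact glue_adj.mpr (Or.inl ⟨u, v, rfl, rfl, hv⟩)

lemma nbr_eA₀ : (glue A B a₀ b₀).neighborSet (Sum.inl (Sum.inl a₀)) =
    insert (Sum.inr (Sum.inl b₀)) (insert (Sum.inl (Sum.inr ()))
      ((fun v : α => (Sum.inl (Sum.inl v) : (α ⊕ Unit) ⊕ (β ⊕ Unit))) '' A.neighborSet a₀)) := by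
  ext x
  simp only [mem_neighborSet, Set.mem_insert_iff, Set.mem_image]
  constructor
  · intro hx
    rcases glue_adj.mp hx with ⟨u',v',h1,rfl,h'⟩|⟨u',v',h1,rfl,h'⟩|⟨h1,rfl⟩|⟨h1,rfl⟩|⟨h1,rfl⟩|⟨h1,rfl⟩|⟨h1,rfl⟩|⟨h1,rfl⟩
    · obtain rfl : a₀ = u' := by simpa using h1
      exact Or.inr (Or.inr ⟨v', h', rfl⟩)
    · simp at h1
    · exact Or.inl rfl
    · simp at h1
    · exact Or.inr (Or.inl rfl)
    · simp at h1
    · simp at h1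
    · simp at h1
  · rintro (rfl | rfl | ⟨v, hv, rfl⟩)
    · exact glue_adj.mpr (Or.inr (Or.inr (Or.inl ⟨rfl, rfl⟩)))
    · exact glue_adj.mpr (Or.inr (Or.inr (Or.inr (Or.inr (Or.inl ⟨rfl, rfl⟩)))))
    · exact glue_adj.mpr (Or.inl ⟨a₀, v, rfl, rfl, hv⟩)

lemma nbr_lA : (glue A B a₀ b₀).neighborSet (Sum.inl (Sum.inr ())) =
    {(Sum.inl (Sum.inl a₀) : (α ⊕ Unit) ⊕ (β ⊕ Unit))} := by
  ext x
  simp only [mem_neighborSet, Set.mem_singleton_iff]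
  constructor
  · intro hx
    rcases glue_adj.mp hx with ⟨u',v',h1,rfl,h'⟩|⟨u',v',h1,rfl,h'⟩|⟨h1,rfl⟩|⟨h1,rfl⟩|⟨h1,rfl⟩|⟨h1,rfl⟩|⟨h1,rfl⟩|⟨h1,rfl⟩
    · simp at h1
    · simp at h1
    · simp at h1
    · simp at h1
    · simp at h1
    · rfl
    · simp at h1
    · simp at h1
  · rintro rfl
    exact glue_adj.mpr (Or.inr (Or.inr (Or.inr (Or.inr (Or.inr (Or.inl ⟨rfl, rfl⟩))))))

lemma nbr_eB {v : β} (hv : v ≠ b₀) :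
    (glue A B a₀ b₀).neighborSet (Sum.inr (Sum.inl v)) =
      (fun w : β => (Sum.inr (Sum.inl w) : (α ⊕ Unit) ⊕ (β ⊕ Unit))) '' B.neighborSet v := by
  ext x
  simp only [mem_neighborSet, Set.mem_image]
  constructor
  · intro hx
    rcases glue_adj.mp hx with ⟨u',v',h1,rfl,h'⟩|⟨u',v',h1,rfl,h'⟩|⟨h1,rfl⟩|⟨h1,rfl⟩|⟨h1,rfl⟩|⟨h1,rfl⟩|⟨h1,rfl⟩|⟨h1,rfl⟩
    · simp at h1
    · obtain rfl : v = u' := by simpa using h1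
      exact ⟨v', h', rfl⟩
    · simp at h1
    · exact absurd (by simpa using h1) hv
    · simp at h1
    · simp at h1
    · exact absurd (by simpa using h1) hv
    · simp at h1
  · rintro ⟨w, hw, rfl⟩
    exact glue_adj.mpr (Or.inr (Or.inl ⟨v, w, rfl, rfl, hw⟩))

lemma nbr_eB₀ : (glue A B a₀ b₀).neighborSet (Sum.inr (Sum.inl b₀)) =
    insert (Sum.inl (Sum.inl a₀)) (insert (Sum.inr (Sum.inr ()))
      ((fun w : β => (Sum.inr (Sum.inl w) : (α ⊕ Unit) ⊕ (β ⊕ Unit))) '' B.neighborSet b₀)) := by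
  ext x
  simp only [mem_neighborSet, Set.mem_insert_iff, Set.mem_image]
  constructor
  · intro hx
    rcases glue_adj.mp hx with ⟨u',v',h1,rfl,h'⟩|⟨u',v',h1,rfl,h'⟩|⟨h1,rfl⟩|⟨h1,rfl⟩|⟨h1,rfl⟩|⟨h1,rfl⟩|⟨h1,rfl⟩|⟨h1,rfl⟩
    · simp at h1
    · obtain rfl : b₀ = u' := by simpa using h1
      exact Or.inr (Or.inr ⟨v', h', rfl⟩)
    · simp at h1
    · exact Or.inl rfl
    · simp at h1
    · simp at h1
    · exact Or.inr (Or.inl rfl)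
    · simp at h1
  · rintro (rfl | rfl | ⟨w, hw, rfl⟩)
    · exact glue_adj.mpr (Or.inr (Or.inr (Or.inr (Or.inl ⟨rfl, rfl⟩))))
    · exact glue_adj.mpr (Or.inr (Or.inr (Or.inr (Or.inr (Or.inr (Or.inr (Or.inl ⟨rfl, rfl⟩)))))))
    · exact glue_adj.mpr (Or.inr (Or.inl ⟨b₀, w, rfl, rfl, hw⟩))

lemma nbr_lB : (glue A B a₀ b₀).neighborSet (Sum.inr (Sum.inr ())) =
    {(Sum.inr (Sum.inl b₀) : (α ⊕ Unit) ⊕ (β ⊕ Unit))} := by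
  ext x
  simp only [mem_neighborSet, Set.mem_singleton_iff]
  constructor
  · intro hx
    rcases glue_adj.mp hx with ⟨u',v',h1,rfl,h'⟩|⟨u',v',h1,rfl,h'⟩|⟨h1,rfl⟩|⟨h1,rfl⟩|⟨h1,rfl⟩|⟨h1,rfl⟩|⟨h1,rfl⟩|⟨h1,rfl⟩
    · simp at h1
    · simp at h1
    · simp at h1
    · simp at h1
    · simp at h1
    · simp at h1
    · simp at h1
    · rfl
  · rintro rfl
    exact glue_adj.mpr (Or.inr (Or.inr (Or.inr (Or.inr (Or.inr (Or.inr (Or.inr ⟨rfl, rfl⟩)))))))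

lemma glue_memF [Fintype α] [Fintype β] (hA : MemF A) (hB : MemF B)
    (hAl : ord A a₀ = 1) (hBl : ord B b₀ = 1) : MemF (glue A B a₀ b₀) := by
  refine ⟨⟨glue_connected hA.1.isConnected hB.1.isConnected,
    glue_acyclic hA.1.IsAcyclic hB.1.IsAcyclic⟩, ?_⟩
  rw [ord_eq_ncard] at hAl hBl
  rintro ((u | u) | (v | u))
  · by_cases hu : u = a₀
    · subst hu
      rw [ord_eq_ncard, nbr_eA₀, Set.ncard_insert_of_notMem (by simp),
        Set.ncard_insert_of_notMem (by simp), Set.ncard_image_of_injective _ injA, hAl]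
      omega
    · rw [ord_eq_ncard, nbr_eA hu, Set.ncard_image_of_injective _ injA, ← ord_eq_ncard]
      exact hA.2 u
  · cases u
    rw [ord_eq_ncard, nbr_lA, Set.ncard_singleton]
    omega
  · by_cases hv : v = b₀
    · subst hv
      rw [ord_eq_ncard, nbr_eB₀, Set.ncard_insert_of_notMem (by simp),
        Set.ncard_insert_of_notMem (by simp), Set.ncard_image_of_injective _ injB, hBl]
      omega
    · rw [ord_eq_ncard, nbr_eB hv, Set.ncard_image_of_injective _ injB, ← ord_eq_ncard]
      exact hB.2 v
  · cases u
    rw [ord_eq_ncard, nbr_lB, Set.ncard_singleton]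
    omega

end MainSec2

section MainSec3

variable {α β : Type*} {A : SimpleGraph α} {B : SimpleGraph β} {a₀ : α} {b₀ : β}

lemma glue_blob_A (hBc : B.Connected) (x : (α ⊕ Unit) ⊕ (β ⊕ Unit))
    (hx : x ∉ Set.range (fun u : α => (Sum.inl (Sum.inl u) : (α ⊕ Unit) ⊕ (β ⊕ Unit)))) :
    ((glue A B a₀ b₀).comap (Subtype.val :
      {z : (α ⊕ Unit) ⊕ (β ⊕ Unit) // z = Sum.inl (Sum.inl a₀) ∨
        z ∉ Set.range (fun u : α => (Sum.inl (Sum.inl u) : (α ⊕ Unit) ⊕ (β ⊕ Unit)))} →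
        (α ⊕ Unit) ⊕ (β ⊕ Unit))).Reachable
      ⟨x, Or.inr hx⟩ ⟨Sum.inl (Sum.inl a₀), Or.inl rfl⟩ := by
  have hmemb : (Sum.inr (Sum.inl b₀) : (α ⊕ Unit) ⊕ (β ⊕ Unit)) ∉
      Set.range (fun u : α => (Sum.inl (Sum.inl u) : (α ⊕ Unit) ⊕ (β ⊕ Unit))) := by
    rintro ⟨w, hw⟩; simp at hw
  have hstep : ((glue A B a₀ b₀).comap (Subtype.val :
      {z : (α ⊕ Unit) ⊕ (β ⊕ Unit) // z = Sum.inl (Sum.inl a₀) ∨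
        z ∉ Set.range (fun u : α => (Sum.inl (Sum.inl u) : (α ⊕ Unit) ⊕ (β ⊕ Unit)))} →
        (α ⊕ Unit) ⊕ (β ⊕ Unit))).Reachable
      ⟨Sum.inr (Sum.inl b₀), Or.inr hmemb⟩ ⟨Sum.inl (Sum.inl a₀), Or.inl rfl⟩ := by
    refine SimpleGraph.Adj.reachable ?_
    exact glue_adj.mpr (Or.inr (Or.inr (Or.inr (Or.inl ⟨rfl, rfl⟩))))
  have hBreach : ∀ v : β, ((glue A B a₀ b₀).comap (Subtype.val :
      {z : (α ⊕ Unit) ⊕ (β ⊕ Unit) // z = Sum.inl (Sum.inl a₀) ∨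
        z ∉ Set.range (fun u : α => (Sum.inl (Sum.inl u) : (α ⊕ Unit) ⊕ (β ⊕ Unit)))} →
        (α ⊕ Unit) ⊕ (β ⊕ Unit))).Reachable
      ⟨Sum.inr (Sum.inl v), Or.inr (by rintro ⟨w, hw⟩; simp at hw)⟩
      ⟨Sum.inr (Sum.inl b₀), Or.inr hmemb⟩ := by
    intro v
    refine reach_collapse
      (fun w : β => (⟨Sum.inr (Sum.inl w), Or.inr (by rintro ⟨t, ht⟩; simp at ht)⟩ :
        {z : (α ⊕ Unit) ⊕ (β ⊕ Unit) // z = Sum.inl (Sum.inl a₀) ∨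
          z ∉ Set.range (fun u : α => (Sum.inl (Sum.inl u) : (α ⊕ Unit) ⊕ (β ⊕ Unit)))}))
      ?_ (hBc.preconnected v b₀)
    intro u v h
    exact Or.inl (glue_adj.mpr (Or.inr (Or.inl ⟨u, v, rfl, rfl, h⟩)))
  rcases x with (u | u) | (v | u)
  · exact absurd ⟨u, rfl⟩ hx
  · cases u
    refine SimpleGraph.Adj.reachable ?_
    exact glue_adj.mpr (Or.inr (Or.inr (Or.inr (Or.inr (Or.inr (Or.inl ⟨rfl, rfl⟩))))))
  · exact (hBreach v).trans hstep
  · cases u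
    refine Reachable.trans ?_ ((hBreach b₀).trans hstep)
    refine SimpleGraph.Adj.reachable ?_
    exact glue_adj.mpr (Or.inr (Or.inr (Or.inr (Or.inr (Or.inr (Or.inr (Or.inr ⟨rfl, rfl⟩)))))))

lemma glue_blob_B (hAc : A.Connected) (x : (α ⊕ Unit) ⊕ (β ⊕ Unit))
    (hx : x ∉ Set.range (fun v : β => (Sum.inr (Sum.inl v) : (α ⊕ Unit) ⊕ (β ⊕ Unit)))) :
    ((glue A B a₀ b₀).comap (Subtype.val :
      {z : (α ⊕ Unit) ⊕ (β ⊕ Unit) // z = Sum.inr (Sum.inl b₀) ∨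
        z ∉ Set.range (fun v : β => (Sum.inr (Sum.inl v) : (α ⊕ Unit) ⊕ (β ⊕ Unit)))} →
        (α ⊕ Unit) ⊕ (β ⊕ Unit))).Reachable
      ⟨x, Or.inr hx⟩ ⟨Sum.inr (Sum.inl b₀), Or.inl rfl⟩ := by
  have hmema : (Sum.inl (Sum.inl a₀) : (α ⊕ Unit) ⊕ (β ⊕ Unit)) ∉
      Set.range (fun v : β => (Sum.inr (Sum.inl v) : (α ⊕ Unit) ⊕ (β ⊕ Unit))) := by
    rintro ⟨w, hw⟩; simp at hw
  have hstep : ((glue A B a₀ b₀).comap (Subtype.val :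
      {z : (α ⊕ Unit) ⊕ (β ⊕ Unit) // z = Sum.inr (Sum.inl b₀) ∨
        z ∉ Set.range (fun v : β => (Sum.inr (Sum.inl v) : (α ⊕ Unit) ⊕ (β ⊕ Unit)))} →
        (α ⊕ Unit) ⊕ (β ⊕ Unit))).Reachable
      ⟨Sum.inl (Sum.inl a₀), Or.inr hmema⟩ ⟨Sum.inr (Sum.inl b₀), Or.inl rfl⟩ := by
    refine SimpleGraph.Adj.reachable ?_
    exact glue_adj.mpr (Or.inr (Or.inr (Or.inl ⟨rfl, rfl⟩)))
  have hAreach : ∀ u : α, ((glue A B a₀ b₀).comap (Subtype.val :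
      {z : (α ⊕ Unit) ⊕ (β ⊕ Unit) // z = Sum.inr (Sum.inl b₀) ∨
        z ∉ Set.range (fun v : β => (Sum.inr (Sum.inl v) : (α ⊕ Unit) ⊕ (β ⊕ Unit)))} →
        (α ⊕ Unit) ⊕ (β ⊕ Unit))).Reachable
      ⟨Sum.inl (Sum.inl u), Or.inr (by rintro ⟨w, hw⟩; simp at hw)⟩
      ⟨Sum.inl (Sum.inl a₀), Or.inr hmema⟩ := by
    intro u
    refine reach_collapse
      (fun w : α => (⟨Sum.inl (Sum.inl w), Or.inr (by rintro ⟨t, ht⟩; simp at ht)⟩ :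
        {z : (α ⊕ Unit) ⊕ (β ⊕ Unit) // z = Sum.inr (Sum.inl b₀) ∨
          z ∉ Set.range (fun v : β => (Sum.inr (Sum.inl v) : (α ⊕ Unit) ⊕ (β ⊕ Unit)))}))
      ?_ (hAc.preconnected u a₀)
    intro u v h
    exact Or.inl (glue_adj.mpr (Or.inl ⟨u, v, rfl, rfl, h⟩))
  rcases x with (u | u) | (v | u)
  · exact (hAreach u).trans hstep
  · cases u
    refine Reachable.trans ?_ ((hAreach a₀).trans hstep)
    refine SimpleGraph.Adj.reachable ?_
    exact glue_adj.mpr (Or.inr (Or.inr (Or.inr (Or.inr (Or.inr (Or.inl ⟨rfl, rfl⟩))))))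
  · exact absurd ⟨v, rfl⟩ hx
  · cases u
    refine SimpleGraph.Adj.reachable ?_
    exact glue_adj.mpr (Or.inr (Or.inr (Or.inr (Or.inr (Or.inr (Or.inr (Or.inr ⟨rfl, rfl⟩)))))))

end MainSec3

section MainSec4

variable {α β : Type*} {A : SimpleGraph α} {B : SimpleGraph β} {a₀ : α} {b₀ : β}

lemma glue_epiF_A (P : Set ℕ∞) (hP : ∀ p ∈ P, 3 ≤ p)
    (hBc : B.Connected) (hAl : ord A a₀ ≤ 1) :
    EpiF P A (glue A B a₀ b₀) (fA a₀) := by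
  refine epiF_glue P hP A _ (fun u => Sum.inl (Sum.inl u)) a₀ (fA a₀)
    injA (fun u => rfl) ?_ ?_ ?_ (glue_blob_A hBc) hAl
  · rintro ((u | u) | (v | u)) hx
    · exact absurd ⟨u, rfl⟩ hx
    · rfl
    · rfl
    · rfl
  · intro u v
    constructor
    · intro h
      rcases glue_adj.mp h with ⟨u',v',h1,h2,h'⟩|⟨u',v',h1,h2,h'⟩|⟨h1,h2⟩|⟨h1,h2⟩|⟨h1,h2⟩|⟨h1,h2⟩|⟨h1,h2⟩|⟨h1,h2⟩
      · obtain rfl : u = u' := by simpa using h1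
        obtain rfl : v = v' := by simpa using h2
        exact h'
      · simp at h1
      · simp at h2
      · simp at h1
      · simp at h2
      · simp at h1
      · simp at h1
      · simp at h1
    · intro h
      exact glue_adj.mpr (Or.inl ⟨u, v, rfl, rfl, h⟩)
  · intro u x h
    rcases glue_adj.mp h with ⟨u',v',h1,rfl,h'⟩|⟨u',v',h1,rfl,h'⟩|⟨h1,rfl⟩|⟨h1,rfl⟩|⟨h1,rfl⟩|⟨h1,rfl⟩|⟨h1,rfl⟩|⟨h1,rfl⟩
    · exact Or.inl ⟨v', rfl⟩
    · simp at h1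
    · exact Or.inr (by simpa using h1)
    · simp at h1
    · exact Or.inr (by simpa using h1)
    · simp at h1
    · simp at h1
    · simp at h1

lemma glue_epiF_B (P : Set ℕ∞) (hP : ∀ p ∈ P, 3 ≤ p)
    (hAc : A.Connected) (hBl : ord B b₀ ≤ 1) :
    EpiF P B (glue A B a₀ b₀) (fB b₀) := by
  refine epiF_glue P hP B _ (fun v => Sum.inr (Sum.inl v)) b₀ (fB b₀)
    injB (fun v => rfl) ?_ ?_ ?_ (glue_blob_B hAc) hBl
  · rintro ((u | u) | (v | u)) hx
    · rfl
    · rfl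
    · exact absurd ⟨v, rfl⟩ hx
    · rfl
  · intro u v
    constructor
    · intro h
      rcases glue_adj.mp h with ⟨u',v',h1,h2,h'⟩|⟨u',v',h1,h2,h'⟩|⟨h1,h2⟩|⟨h1,h2⟩|⟨h1,h2⟩|⟨h1,h2⟩|⟨h1,h2⟩|⟨h1,h2⟩
      · simp at h1
      · obtain rfl : u = u' := by simpa using h1
        obtain rfl : v = v' := by simpa using h2
        exact h'
      · simp at h1
      · simp at h2
      · simp at h1
      · simp at h1
      · simp at h2
      · simp at h1
    · intro h
      exact glue_adj.mpr (Or.inr (Or.inl ⟨u, v, rfl, rfl, h⟩))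
  · intro v x h
    rcases glue_adj.mp h with ⟨u',v',h1,rfl,h'⟩|⟨u',v',h1,rfl,h'⟩|⟨h1,rfl⟩|⟨h1,rfl⟩|⟨h1,rfl⟩|⟨h1,rfl⟩|⟨h1,rfl⟩|⟨h1,rfl⟩
    · simp at h1
    · exact Or.inl ⟨v', rfl⟩
    · simp at h1
    · exact Or.inr (by simpa using h1)
    · simp at h1
    · simp at h1
    · exact Or.inr (by simpa using h1)
    · simp at h1

end MainSec4

lemma jpp_main (P : Set ℕ∞) (hP : ∀ p ∈ P, 3 ≤ p) {α β : Type} [Fintype α] [Fintype β]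
    (A : SimpleGraph α) (B : SimpleGraph β) (hA : MemF A) (hB : MemF B)
    (a₀ : α) (b₀ : β) (ha₀ : ord A a₀ = 1) (hb₀ : ord B b₀ = 1) :
    ∃ (γ : Type) (_ : Fintype γ) (C : SimpleGraph γ) (f : γ → α) (g : γ → β),
      MemF C ∧ EpiF P A C f ∧ EpiF P B C g :=
  ⟨(α ⊕ Unit) ⊕ (β ⊕ Unit), inferInstance, glue A B a₀ b₀, fA a₀, fB b₀,
    glue_memF hA hB ha₀ hb₀,
    glue_epiF_A P hP hB.1.isConnected (le_of_eq ha₀),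
    glue_epiF_B P hP hA.1.isConnected (le_of_eq hb₀)⟩

end JPP


/-- Let `P ⊆ {3,4,5,…,∞}` with `∞ ∈ P` and let `A, B ∈ 𝓕_P`.  Then there
exist `C ∈ 𝓕_P` and epimorphisms `f : C → A` and `g : C → B` belonging to `𝓕_P`
(the joint projection property for `𝓕_P`). -/
theorem jointProjection_F {α β : Type} [Fintype α] [Fintype β]
    (P : Set ℕ∞) (hP : ∀ p ∈ P, 3 ≤ p) (hPtop : ⊤ ∈ P)
    (A : SimpleGraph α) (B : SimpleGraph β)
    (hA : PF.MemF A) (hB : PF.MemF B) :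
    ∃ (γ : Type) (_ : Fintype γ) (C : SimpleGraph γ) (f : γ → α) (g : γ → β),
      PF.MemF C ∧ PF.EpiF P A C f ∧ PF.EpiF P B C g := by
  classical
  by_cases hα : ∀ x y : α, x = y
  · haveI : Subsingleton α := ⟨hα⟩
    obtain ⟨a⟩ := hA.1.isConnected.nonempty
    exact ⟨β, inferInstance, B, (fun _ => a), id, hB,
      JPP.epiF_const P hP A B hB.1.isConnected a, JPP.epiF_id P B⟩
  · by_cases hβ : ∀ x y : β, x = y
    · haveI : Subsingleton β := ⟨hβ⟩
      obtain ⟨b⟩ := hB.1.isConnected.nonempty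
      exact ⟨α, inferInstance, A, id, (fun _ => b), hA,
        JPP.epiF_id P A, JPP.epiF_const P hP B A hA.1.isConnected b⟩
    · push_neg at hα hβ
      obtain ⟨x1, y1, hxy1⟩ := hα
      obtain ⟨x2, y2, hxy2⟩ := hβ
      haveI : Nontrivial α := ⟨⟨x1, y1, hxy1⟩⟩
      haveI : Nontrivial β := ⟨⟨x2, y2, hxy2⟩⟩
      obtain ⟨a₀, ha₀⟩ := JPP.exists_leaf hA.1 ‹_›
      obtain ⟨b₀, hb₀⟩ := JPP.exists_leaf hB.1 ‹_›
      exact JPP.jpp_main P hP A B hA hB a₀ b₀ ha₀ hb₀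
end

section
/- Let P ⊆ {3,4,5,…} be nonempty and let A, B ∈ 𝓖_P. Then there exist C ∈ 𝓖_P and coherent epimorphisms f : C → A and g : C → B belonging to 𝓖_P (the joint projection property for 𝓖_P). -/
open SimpleGraph

namespace JPPAux

open SimpleGraph

lemma reach_map {V W : Type*} {G : SimpleGraph V} {H : SimpleGraph W} (f : V → W)
    (h : ∀ a b, G.Adj a b → f a = f b ∨ H.Adj (f a) (f b)) {x y : V}
    (hr : G.Reachable x y) : H.Reachable (f x) (f y) := by
  obtain ⟨p⟩ := hr
  induction p with
  | nil => exact Reachable.refl _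
  | cons h' p ih =>
    rcases h _ _ h' with he | he
    · rw [he]; exact ih
    · exact he.reachable.trans ih

lemma connected_of_subsingleton {V : Type*} (G : SimpleGraph V) [Nonempty V]
    [Subsingleton V] : G.Connected :=
  ⟨fun a b => by rw [Subsingleton.elim a b]⟩

lemma exists_leaf {V : Type*} [Fintype V] (G : SimpleGraph V) (hG : G.IsTree) :
    ∃ a : V, PF.ord G a ≤ 1 := by
  classical
  haveI := hG.1.nonempty
  have hord : ∀ a, PF.ord G a = G.degree a := fun a => by
    rw [PF.ord, Nat.card_eq_fintype_card, SimpleGraph.degree, SimpleGraph.neighborFinset,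
      Set.toFinset_card]
  by_contra hcon
  push_neg at hcon
  have h2 : ∀ a, 2 ≤ G.degree a := fun a => by rw [← hord]; exact hcon a
  have hsum := SimpleGraph.sum_degrees_eq_twice_card_edges G
  have hcard := hG.card_edgeFinset
  have hlb : 2 * Fintype.card V ≤ ∑ v, G.degree v := by
    calc 2 * Fintype.card V = ∑ _v : V, 2 := by simp [mul_comm]
    _ ≤ ∑ v, G.degree v := Finset.sum_le_sum (fun i _ => h2 i)
  have hpos : 1 ≤ Fintype.card V := Fintype.card_pos
  omega

lemma epiG_of {α γ : Type*} {A : SimpleGraph α} {C : SimpleGraph γ}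
    (f : γ → α) (e : α → γ)
    (h1 : ∀ a, f (e a) = a)
    (h2 : ∀ a a', A.Adj a a' ↔ C.Adj (e a) (e a'))
    (h3 : ∀ x y, C.Adj x y → f x = f y ∨ A.Adj (f x) (f y))
    (h4 : PF.IsMonotone C f)
    (h5 : ∀ a, 3 ≤ PF.ord A a → PF.ord C (e a) = PF.ord A a)
    (h6 : ∀ a, 3 ≤ PF.ord A a → ∀ z, f z = a → z = e a) :
    PF.EpiG A C f := by
  have heinj : Function.Injective e := fun u v h => by rw [← h1 u, ← h1 v, h]
  refine ⟨⟨fun a => ⟨e a, h1 a⟩, ?_⟩, h4, ?_⟩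
  · intro a a'
    constructor
    · intro h
      exact ⟨h.ne, e a, e a', h1 a, h1 a', (h2 a a').mp h⟩
    · rintro ⟨hne, b, b', rfl, rfl, hbb⟩
      rcases h3 _ _ hbb with h | h
      · exact absurd h hne
      · exact h
  · intro a ha
    have fib : ∀ z : γ, f z ≠ a →
        ∀ (p1 : z ≠ e a) (p2 : e (f z) ≠ e a),
        (PF.del C (e a)).Reachable ⟨z, p1⟩ ⟨e (f z), p2⟩ := by
      intro z hz p1 p2
      have hconn := h4 (f z)
      have hr := hconn.preconnected ⟨z, rfl⟩ ⟨e (f z), h1 (f z)⟩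
      exact reach_map (G := SimpleGraph.comap (Subtype.val : (f ⁻¹' {f z}) → γ) C)
        (H := PF.del C (e a))
        (fun w => ⟨w.1, fun hh => hz (by
          have hw : f w.1 = f z := w.2
          rw [← hw, hh, h1])⟩)
        (fun u v huv => Or.inr huv) hr
    refine ⟨e a, ⟨h1 a, (h5 a ha).ge, ?_⟩, h5 a ha⟩
    intro x y hfx hfy
    have hxe : x ≠ e a := fun h => hfx (by rw [h, h1])
    have hye : y ≠ e a := fun h => hfy (by rw [h, h1])
    have hfxe : e (f x) ≠ e a := fun h => hfx (heinj h)
    have hfye : e (f y) ≠ e a := fun h => hfy (heinj h)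
    constructor
    · rintro ⟨hx, hy, hreach⟩
      refine ⟨hxe, hye, ?_⟩
      have hmid : (PF.del C (e a)).Reachable ⟨e (f x), hfxe⟩ ⟨e (f y), hfye⟩ :=
        reach_map (G := PF.del A a) (H := PF.del C (e a))
          (fun u => ⟨e u.1, fun hh => u.2 (heinj hh)⟩)
          (fun u v huv => Or.inr ((h2 _ _).mp huv)) hreach
      exact (fib x hfx hxe hfxe).trans (hmid.trans (fib y hfy hye hfye).symm)
    · rintro ⟨hx, hy, hreach⟩
      refine ⟨hfx, hfy, ?_⟩
      exact reach_map (G := PF.del C (e a)) (H := PF.del A a)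
        (fun z => ⟨f z.1, fun hh => z.2 (h6 a ha _ hh)⟩)
        (fun u v huv => (h3 _ _ huv).imp (fun hh => Subtype.ext hh) id) hreach

end JPPAux

namespace JPPAux

open SimpleGraph

variable {V W : Type*}

/-! ### Gluing two graphs with a bridge, and adding pendant leaves -/

def sumGlue (G1 : SimpleGraph V) (G2 : SimpleGraph W) (x0 : V) (y0 : W) :
    SimpleGraph (V ⊕ W) where
  Adj x y := match x, y with
    | .inl a, .inl b => G1.Adj a b
    | .inl a, .inr b => a = x0 ∧ b = y0
    | .inr a, .inl b => b = x0 ∧ a = y0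
    | .inr a, .inr b => G2.Adj a b
  symm := by refine ⟨?_⟩; rintro (a|a) (b|b) h <;> first
    | exact h.symm
    | exact ⟨h.1, h.2⟩
  loopless := by
    refine ⟨?_⟩
    rintro (a|a) h
    · exact h.ne rfl
    · exact h.ne rfl

def addLeaves (G : SimpleGraph V) (x0 : V) (k : ℕ) : SimpleGraph (V ⊕ Fin k) where
  Adj x y := match x, y with
    | .inl a, .inl b => G.Adj a b
    | .inl a, .inr _ => a = x0
    | .inr _, .inl b => b = x0
    | .inr _, .inr _ => False
  symm := by refine ⟨?_⟩; rintro (a|a) (b|b) h <;> first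
    | exact h.symm
    | exact h
  loopless := by
    refine ⟨?_⟩
    rintro (a|a) h
    · exact h.ne rfl
    · exact h

variable {G1 : SimpleGraph V} {G2 : SimpleGraph W} {G : SimpleGraph V} {x0 : V} {y0 : W} {k : ℕ}

lemma sumGlue_connected (h1 : G1.Connected) (h2 : G2.Connected) :
    (sumGlue G1 G2 x0 y0).Connected := by
  haveI : Nonempty V := h1.nonempty
  have hl : ∀ a : V, (sumGlue G1 G2 x0 y0).Reachable (.inl a) (.inl x0) := fun a =>
    reach_map Sum.inl (fun a b h => Or.inr h) (h1.preconnected a x0)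
  have hr : ∀ b : W, (sumGlue G1 G2 x0 y0).Reachable (.inr b) (.inl x0) := fun b =>
    ((reach_map Sum.inr (fun a b h => Or.inr h) (h2.preconnected b y0)).trans
      (Adj.reachable (⟨rfl, rfl⟩ : x0 = x0 ∧ y0 = y0)))
  have key : ∀ x : V ⊕ W, (sumGlue G1 G2 x0 y0).Reachable x (.inl x0) := by
    rintro (a|a)
    · exact hl a
    · exact hr a
  exact ⟨fun x y => (key x).trans (key y).symm⟩

lemma sumGlue_not_reach_cross :
    ¬ ((sumGlue G1 G2 x0 y0) \ fromEdgeSet {s(Sum.inl x0, Sum.inr y0)}).Reachable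
      (.inl x0) (.inr y0) := by
  intro hr
  have := reach_map (H := (⊥ : SimpleGraph Bool))
    (Sum.elim (fun _ => false) (fun _ => true)) ?_ hr
  · simpa using reachable_bot.mp this
  · rintro (a|a) (b|b) ⟨hab, hne⟩
    · exact Or.inl rfl
    · obtain ⟨rfl, rfl⟩ := (by exact hab : a = x0 ∧ b = y0)
      exact absurd ⟨rfl, by simp⟩ hne
    · obtain ⟨rfl, rfl⟩ := (by exact hab : b = x0 ∧ a = y0)
      exact absurd ⟨Sym2.eq_swap, by simp⟩ hne
    · exact Or.inl rfl

lemma sumGlue_isTree (h1 : G1.IsTree) (h2 : G2.IsTree) :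
    (sumGlue G1 G2 x0 y0).IsTree := by
  have hb1 := isAcyclic_iff_forall_adj_isBridge.mp h1.2
  have hb2 := isAcyclic_iff_forall_adj_isBridge.mp h2.2
  refine ⟨sumGlue_connected h1.1 h2.1, isAcyclic_iff_forall_adj_isBridge.mpr ?_⟩
  rintro (v|v) (w|w) hadj
  · refine isBridge_iff.mpr (fun hr => ?_)
    have := reach_map (H := G1 \ fromEdgeSet {s(v, w)})
      (Sum.elim id (fun _ => x0)) ?_ hr
    · exact (isBridge_iff.mp (hb1 hadj)) this
    · rintro (a|a) (b|b) ⟨hab, hne⟩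
      · refine Or.inr ⟨hab, fun hc => hne ?_⟩
        rw [fromEdgeSet_adj, Set.mem_singleton_iff] at hc
        rw [fromEdgeSet_adj, Set.mem_singleton_iff]
        refine ⟨?_, by simpa using (by exact hab : G1.Adj a b).ne⟩
        have := congrArg (Sym2.map (Sum.inl : V → V ⊕ W)) hc.1
        simpa [Sym2.map_pair_eq] using this
      · exact Or.inl (by simpa using (by exact hab : a = x0 ∧ b = y0).1)
      · exact Or.inl (by simpa using ((by exact hab : b = x0 ∧ a = y0).1).symm)
      · exact Or.inl rfl
  · obtain ⟨rfl, rfl⟩ := (by exact hadj : v = x0 ∧ w = y0)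
    exact isBridge_iff.mpr sumGlue_not_reach_cross
  · obtain ⟨rfl, rfl⟩ := (by exact hadj : w = x0 ∧ v = y0)
    refine isBridge_iff.mpr (fun hr => ?_)
    rw [Sym2.eq_swap] at hr
    exact sumGlue_not_reach_cross hr.symm
  · refine isBridge_iff.mpr (fun hr => ?_)
    have := reach_map (H := G2 \ fromEdgeSet {s(v, w)})
      (Sum.elim (fun _ => y0) id) ?_ hr
    · exact (isBridge_iff.mp (hb2 hadj)) this
    · rintro (a|a) (b|b) ⟨hab, hne⟩
      · exact Or.inl rfl
      · exact Or.inl (by simpa using ((by exact hab : a = x0 ∧ b = y0).2).symm)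
      · exact Or.inl (by simpa using (by exact hab : b = x0 ∧ a = y0).2)
      · refine Or.inr ⟨hab, fun hc => hne ?_⟩
        rw [fromEdgeSet_adj, Set.mem_singleton_iff] at hc
        rw [fromEdgeSet_adj, Set.mem_singleton_iff]
        refine ⟨?_, by simpa using (by exact hab : G2.Adj a b).ne⟩
        have := congrArg (Sym2.map (Sum.inr : W → V ⊕ W)) hc.1
        simpa [Sym2.map_pair_eq] using this

lemma addLeaves_connected (h : G.Connected) : (addLeaves G x0 k).Connected := by
  haveI : Nonempty V := h.nonempty
  have key : ∀ x : V ⊕ Fin k, (addLeaves G x0 k).Reachable x (.inl x0) := by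
    rintro (a|i)
    · exact reach_map Sum.inl (fun a b h => Or.inr h) (h.preconnected a x0)
    · exact Adj.reachable (rfl : x0 = x0)
  exact ⟨fun x y => (key x).trans (key y).symm⟩

lemma addLeaves_isTree (h : G.IsTree) : (addLeaves G x0 k).IsTree := by
  have hb := isAcyclic_iff_forall_adj_isBridge.mp h.2
  have cross : ∀ i : Fin k,
      ¬ ((addLeaves G x0 k) \ fromEdgeSet {s(Sum.inl x0, Sum.inr i)}).Reachable
        (.inl x0) (.inr i) := by
    intro i hr
    have := reach_map (H := (⊥ : SimpleGraph Bool))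
      (Sum.elim (fun _ => false) (fun j => decide (j = i))) ?_ hr
    · simpa using reachable_bot.mp this
    · rintro (a|a) (b|b) ⟨hab, hne⟩
      · exact Or.inl rfl
      · have ha : a = x0 := hab
        by_cases hbi : b = i
        · subst ha; subst hbi; exact absurd ⟨rfl, by simp⟩ hne
        · exact Or.inl (by simp [hbi])
      · have hb' : b = x0 := hab
        by_cases hai : a = i
        · subst hb'; subst hai; exact absurd ⟨Sym2.eq_swap, by simp⟩ hne
        · exact Or.inl (by simp [hai])
      · exact (hab : False).elim
  refine ⟨addLeaves_connected h.1, isAcyclic_iff_forall_adj_isBridge.mpr ?_⟩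
  rintro (v|v) (w|w) hadj
  · refine isBridge_iff.mpr (fun hr => ?_)
    have := reach_map (H := G \ fromEdgeSet {s(v, w)}) (Sum.elim id (fun _ => x0)) ?_ hr
    · exact (isBridge_iff.mp (hb hadj)) this
    · rintro (a|a) (b|b) ⟨hab, hne⟩
      · refine Or.inr ⟨hab, fun hc => hne ?_⟩
        rw [fromEdgeSet_adj, Set.mem_singleton_iff] at hc
        rw [fromEdgeSet_adj, Set.mem_singleton_iff]
        refine ⟨?_, by simpa using (by exact hab : G.Adj a b).ne⟩
        have := congrArg (Sym2.map (Sum.inl : V → V ⊕ Fin k)) hc.1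
        simpa [Sym2.map_pair_eq] using this
      · exact Or.inl (hab : a = x0)
      · have h' : b = x0 := hab
        exact Or.inl h'.symm
      · exact (hab : False).elim
  · have hv : v = x0 := hadj
    subst hv
    exact isBridge_iff.mpr (cross w)
  · have hw : w = x0 := hadj
    subst hw
    refine isBridge_iff.mpr (fun hr => ?_)
    rw [Sym2.eq_swap] at hr
    exact cross v hr.symm
  · exact (hadj : False).elim

/-! ### Vertex orders -/

lemma ord_eq_ncard (T : SimpleGraph V) (a : V) : PF.ord T a = (T.neighborSet a).ncard :=
  Nat.card_coe_set_eq _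

lemma nbhd_sumGlue_inl (a : V) (ha : a ≠ x0) :
    (sumGlue G1 G2 x0 y0).neighborSet (.inl a) = Sum.inl '' G1.neighborSet a := by
  ext (b|b) <;>
    simp only [mem_neighborSet, Set.mem_image, Set.mem_union, Set.mem_singleton_iff]
  · constructor
    · intro h; exact ⟨b, h, rfl⟩
    · rintro ⟨c, hc, hcb⟩
      obtain rfl : c = b := by injection hcb
      exact hc
  · constructor
    · rintro ⟨h1, -⟩; exact absurd h1 ha
    · rintro ⟨c, -, hcb⟩; exact absurd hcb (by simp)

lemma nbhd_sumGlue_inl_anchor :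
    (sumGlue G1 G2 x0 y0).neighborSet (.inl x0) =
      insert (Sum.inr y0) (Sum.inl '' G1.neighborSet x0) := by
  ext (b|b) <;>
    simp only [mem_neighborSet, Set.mem_insert_iff, Set.mem_image]
  · constructor
    · intro h; exact Or.inr ⟨b, h, rfl⟩
    · rintro (h | ⟨c, hc, hcb⟩)
      · exact absurd h (by simp)
      · obtain rfl : c = b := by injection hcb
        exact hc
  · constructor
    · rintro ⟨-, h2⟩; exact Or.inl (by rw [h2])
    · rintro (h | ⟨c, -, hcb⟩)
      · obtain rfl : b = y0 := by injection h
        exact ⟨rfl, rfl⟩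
      · exact absurd hcb (by simp)

lemma nbhd_sumGlue_inr (b : W) (hb : b ≠ y0) :
    (sumGlue G1 G2 x0 y0).neighborSet (.inr b) = Sum.inr '' G2.neighborSet b := by
  ext (c|c) <;>
    simp only [mem_neighborSet, Set.mem_image]
  · constructor
    · rintro ⟨-, h2⟩; exact absurd h2 hb
    · rintro ⟨d, -, hdc⟩; exact absurd hdc (by simp)
  · constructor
    · intro h; exact ⟨c, h, rfl⟩
    · rintro ⟨d, hd, hdc⟩
      obtain rfl : d = c := by injection hdc
      exact hd

lemma nbhd_sumGlue_inr_anchor :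
    (sumGlue G1 G2 x0 y0).neighborSet (.inr y0) =
      insert (Sum.inl x0) (Sum.inr '' G2.neighborSet y0) := by
  ext (c|c) <;>
    simp only [mem_neighborSet, Set.mem_insert_iff, Set.mem_image]
  · constructor
    · rintro ⟨h1, -⟩; exact Or.inl (by rw [h1])
    · rintro (h | ⟨d, -, hdc⟩)
      · obtain rfl : c = x0 := by injection h
        exact ⟨rfl, rfl⟩
      · exact absurd hdc (by simp)
  · constructor
    · intro h; exact Or.inr ⟨c, h, rfl⟩
    · rintro (h | ⟨d, hd, hdc⟩)
      · exact absurd h (by simp)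
      · obtain rfl : d = c := by injection hdc
        exact hd

lemma nbhd_addLeaves_inl (a : V) (ha : a ≠ x0) :
    (addLeaves G x0 k).neighborSet (.inl a) = Sum.inl '' G.neighborSet a := by
  ext (b|b) <;> simp only [mem_neighborSet, Set.mem_image]
  · constructor
    · intro h; exact ⟨b, h, rfl⟩
    · rintro ⟨c, hc, hcb⟩
      obtain rfl : c = b := by injection hcb
      exact hc
  · constructor
    · intro h; exact absurd (h : a = x0) ha
    · rintro ⟨c, -, hcb⟩; exact absurd hcb (by simp)

lemma nbhd_addLeaves_anchor :
    (addLeaves G x0 k).neighborSet (.inl x0) =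
      Sum.inl '' G.neighborSet x0 ∪ Set.range Sum.inr := by
  ext (b|b) <;> simp only [mem_neighborSet, Set.mem_union, Set.mem_image, Set.mem_range]
  · constructor
    · intro h; exact Or.inl ⟨b, h, rfl⟩
    · rintro (⟨c, hc, hcb⟩ | ⟨c, hcb⟩)
      · obtain rfl : c = b := by injection hcb
        exact hc
      · exact absurd hcb (by simp)
  · constructor
    · intro _; exact Or.inr ⟨b, rfl⟩
    · intro _; exact (rfl : x0 = x0)

lemma nbhd_addLeaves_inr (i : Fin k) :
    (addLeaves G x0 k).neighborSet (.inr i) = {Sum.inl x0} := by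
  ext (b|b) <;> simp only [mem_neighborSet, Set.mem_singleton_iff]
  · constructor
    · intro h; rw [(h : b = x0)]
    · intro h
      obtain rfl : b = x0 := by injection h
      exact rfl
  · constructor
    · intro h; exact (h : False).elim
    · intro h; exact absurd h (by simp)

section FiniteOrd
variable [Finite V] [Finite W]

lemma ord_sumGlue_inl {a : V} (ha : a ≠ x0) :
    PF.ord (sumGlue G1 G2 x0 y0) (.inl a) = PF.ord G1 a := by
  rw [ord_eq_ncard, ord_eq_ncard, nbhd_sumGlue_inl a ha,
    Set.ncard_image_of_injective _ Sum.inl_injective]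

lemma ord_sumGlue_inl_anchor :
    PF.ord (sumGlue G1 G2 x0 y0) (.inl x0) = PF.ord G1 x0 + 1 := by
  rw [ord_eq_ncard, ord_eq_ncard, nbhd_sumGlue_inl_anchor,
    Set.ncard_insert_of_notMem (by simp),
    Set.ncard_image_of_injective _ Sum.inl_injective]

lemma ord_sumGlue_inr {b : W} (hb : b ≠ y0) :
    PF.ord (sumGlue G1 G2 x0 y0) (.inr b) = PF.ord G2 b := by
  rw [ord_eq_ncard, ord_eq_ncard, nbhd_sumGlue_inr b hb,
    Set.ncard_image_of_injective _ Sum.inr_injective]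

lemma ord_sumGlue_inr_anchor :
    PF.ord (sumGlue G1 G2 x0 y0) (.inr y0) = PF.ord G2 y0 + 1 := by
  rw [ord_eq_ncard, ord_eq_ncard, nbhd_sumGlue_inr_anchor,
    Set.ncard_insert_of_notMem (by simp),
    Set.ncard_image_of_injective _ Sum.inr_injective]

lemma ord_addLeaves_inl {a : V} (ha : a ≠ x0) :
    PF.ord (addLeaves G x0 k) (.inl a) = PF.ord G a := by
  rw [ord_eq_ncard, ord_eq_ncard, nbhd_addLeaves_inl a ha,
    Set.ncard_image_of_injective _ Sum.inl_injective]

lemma ord_addLeaves_anchor :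
    PF.ord (addLeaves G x0 k) (.inl x0) = PF.ord G x0 + k := by
  rw [ord_eq_ncard, ord_eq_ncard, nbhd_addLeaves_anchor,
    Set.ncard_union_eq (Set.disjoint_left.mpr
      (by rintro _ ⟨c, -, rfl⟩ ⟨d, hd⟩; exact absurd hd (by simp)))
      (Set.toFinite _) (Set.toFinite _),
    Set.ncard_image_of_injective _ Sum.inl_injective]
  congr 1
  rw [← Nat.card_coe_set_eq, Nat.card_range_of_injective Sum.inr_injective]
  simp

lemma ord_addLeaves_inr (i : Fin k) :
    PF.ord (addLeaves G x0 k) (.inr i) = 1 := by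
  rw [ord_eq_ncard, nbhd_addLeaves_inr, Set.ncard_singleton]

end FiniteOrd

end JPPAux

namespace JPPAux

open SimpleGraph

section Glue

variable {α β : Type*} (A : SimpleGraph α) (B : SimpleGraph β) (a0 : α) (b0 : β) (k m : ℕ)

def glueC : SimpleGraph (((α ⊕ β) ⊕ Fin k) ⊕ Fin m) :=
  addLeaves (addLeaves (sumGlue A B a0 b0) (.inl a0) k) (.inl (.inr b0)) m

variable {α β : Type*}

def fC (a0 : α) (k m : ℕ) {β : Type*} : ((α ⊕ β) ⊕ Fin k) ⊕ Fin m → α :=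
  Sum.elim (Sum.elim (Sum.elim id fun _ => a0) fun _ => a0) fun _ => a0

def gC (b0 : β) (k m : ℕ) {α : Type*} : ((α ⊕ β) ⊕ Fin k) ⊕ Fin m → β :=
  Sum.elim (Sum.elim (Sum.elim (fun _ => b0) id) fun _ => b0) fun _ => b0

def eA (k m : ℕ) {α β : Type*} (a : α) : ((α ⊕ β) ⊕ Fin k) ⊕ Fin m :=
  .inl (.inl (.inl a))

def eB (k m : ℕ) {α β : Type*} (b : β) : ((α ⊕ β) ⊕ Fin k) ⊕ Fin m :=
  .inl (.inl (.inr b))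

end Glue

section Glue2

variable {α β : Type*} {A : SimpleGraph α} {B : SimpleGraph β} {a0 : α} {b0 : β} {k m : ℕ}

lemma glueC_isTree (hA : A.IsTree) (hB : B.IsTree) : (glueC A B a0 b0 k m).IsTree :=
  addLeaves_isTree (addLeaves_isTree (sumGlue_isTree hA hB))

section GlueOrd
variable [Finite α] [Finite β]

lemma glueC_ord_a {a : α} (ha : a ≠ a0) :
    PF.ord (glueC A B a0 b0 k m) (eA k m a) = PF.ord A a := by
  unfold glueC eA
  rw [ord_addLeaves_inl (by simp), ord_addLeaves_inl (by simp [ha]), ord_sumGlue_inl ha]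

lemma glueC_ord_a0 :
    PF.ord (glueC A B a0 b0 k m) (eA k m a0) = PF.ord A a0 + 1 + k := by
  unfold glueC eA
  rw [ord_addLeaves_inl (by simp), ord_addLeaves_anchor, ord_sumGlue_inl_anchor]

lemma glueC_ord_b {b : β} (hb : b ≠ b0) :
    PF.ord (glueC A B a0 b0 k m) (eB k m b) = PF.ord B b := by
  unfold glueC eB
  rw [ord_addLeaves_inl (by simp [hb]), ord_addLeaves_inl (by simp), ord_sumGlue_inr hb]

lemma glueC_ord_b0 :
    PF.ord (glueC A B a0 b0 k m) (eB k m b0) = PF.ord B b0 + 1 + m := by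
  unfold glueC eB
  rw [ord_addLeaves_anchor, ord_addLeaves_inl (by simp), ord_sumGlue_inr_anchor]

lemma glueC_ord_k (i : Fin k) :
    PF.ord (glueC A B a0 b0 k m) (.inl (.inr i)) = 1 := by
  unfold glueC
  rw [ord_addLeaves_inl (by simp), ord_addLeaves_inr]

lemma glueC_ord_m (j : Fin m) :
    PF.ord (glueC A B a0 b0 k m) (.inr j) = 1 := by
  unfold glueC
  rw [ord_addLeaves_inr]

end GlueOrd

lemma glueC_h3_f : ∀ x y, (glueC A B a0 b0 k m).Adj x y →
    fC a0 k m x = fC a0 k m y ∨ A.Adj (fC a0 k m x) (fC a0 k m y) := by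
  rintro (((x|x)|x)|x) (((y|y)|y)|y) h
  · exact Or.inr (h : A.Adj x y)
  · have h' : x = a0 ∧ y = b0 := h
    exact Or.inl h'.1
  · have h' : (Sum.inl x : α ⊕ β) = Sum.inl a0 := h
    exact Or.inl (Sum.inl.inj h')
  · have h' : (Sum.inl (Sum.inl x) : (α ⊕ β) ⊕ Fin k) = Sum.inl (Sum.inr b0) := h
    simp at h'
  · have h' : y = a0 ∧ x = b0 := h
    exact Or.inl h'.1.symm
  · exact Or.inl rfl
  · have h' : (Sum.inr x : α ⊕ β) = Sum.inl a0 := h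
    simp at h'
  · exact Or.inl rfl
  · have h' : (Sum.inl y : α ⊕ β) = Sum.inl a0 := h
    exact Or.inl (Sum.inl.inj h').symm
  · exact Or.inl rfl
  · exact Or.inl rfl
  · exact Or.inl rfl
  · have h' : (Sum.inl (Sum.inl y) : (α ⊕ β) ⊕ Fin k) = Sum.inl (Sum.inr b0) := h
    simp at h'
  · exact Or.inl rfl
  · exact Or.inl rfl
  · exact Or.inl rfl

lemma glueC_h3_g : ∀ x y, (glueC A B a0 b0 k m).Adj x y →
    gC b0 k m x = gC b0 k m y ∨ B.Adj (gC b0 k m x) (gC b0 k m y) := by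
  rintro (((x|x)|x)|x) (((y|y)|y)|y) h
  · exact Or.inl rfl
  · have h' : x = a0 ∧ y = b0 := h
    exact Or.inl h'.2.symm
  · exact Or.inl rfl
  · have h' : (Sum.inl (Sum.inl x) : (α ⊕ β) ⊕ Fin k) = Sum.inl (Sum.inr b0) := h
    simp at h'
  · have h' : y = a0 ∧ x = b0 := h
    exact Or.inl h'.2
  · exact Or.inr (h : B.Adj x y)
  · have h' : (Sum.inr x : α ⊕ β) = Sum.inl a0 := h
    simp at h'
  · have h' : (Sum.inl (Sum.inr x) : (α ⊕ β) ⊕ Fin k) = Sum.inl (Sum.inr b0) := h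
    exact Or.inl (Sum.inr.inj (Sum.inl.inj h'))
  · exact Or.inl rfl
  · have h' : (Sum.inr y : α ⊕ β) = Sum.inl a0 := h
    simp at h'
  · exact Or.inl rfl
  · exact Or.inl rfl
  · exact Or.inl rfl
  · have h' : (Sum.inl (Sum.inr y) : (α ⊕ β) ⊕ Fin k) = Sum.inl (Sum.inr b0) := h
    exact Or.inl (Sum.inr.inj (Sum.inl.inj h')).symm
  · exact Or.inl rfl
  · exact Or.inl rfl

lemma glueC_fiber_f {a : α} (ha : a ≠ a0) :
    ∀ z : ((α ⊕ β) ⊕ Fin k) ⊕ Fin m, fC a0 k m z = a → z = eA k m a := by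
  rintro (((x|x)|x)|x) hz
  · have : x = a := hz
    rw [this]; rfl
  · exact absurd (hz : a0 = a).symm ha
  · exact absurd (hz : a0 = a).symm ha
  · exact absurd (hz : a0 = a).symm ha

lemma glueC_fiber_g {b : β} (hb : b ≠ b0) :
    ∀ z : ((α ⊕ β) ⊕ Fin k) ⊕ Fin m, gC b0 k m z = b → z = eB k m b := by
  rintro (((x|x)|x)|x) hz
  · exact absurd (hz : b0 = b).symm hb
  · have : x = b := hz
    rw [this]; rfl
  · exact absurd (hz : b0 = b).symm hb
  · exact absurd (hz : b0 = b).symm hb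

lemma glueC_mono_f (hBc : B.Connected) :
    PF.IsMonotone (glueC A B a0 b0 k m) (fC a0 k m) := by
  intro a
  by_cases haa : a = a0
  · rw [haa]
    haveI : Nonempty ↥(fC a0 k m ⁻¹' {a0} : Set (((α ⊕ β) ⊕ Fin k) ⊕ Fin m)) :=
      ⟨⟨eA k m a0, rfl⟩⟩
    set Γ := SimpleGraph.comap
      (Subtype.val : ↥(fC a0 k m ⁻¹' {a0} : Set (((α ⊕ β) ⊕ Fin k) ⊕ Fin m)) → _)
      (glueC A B a0 b0 k m) with hΓ
    have bstep : ∀ (hz : Sum.inl (Sum.inl (Sum.inr b0)) ∈ (fC a0 k m ⁻¹' {a0} : Set _)),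
        Γ.Reachable ⟨.inl (.inl (.inr b0)), hz⟩ ⟨eA k m a0, rfl⟩ :=
      fun hz => Adj.reachable ((⟨rfl, rfl⟩ : a0 = a0 ∧ b0 = b0) :
        (glueC A B a0 b0 k m).Adj (.inl (.inl (.inr b0))) (.inl (.inl (.inl a0))))
    have key : ∀ (z : ((α ⊕ β) ⊕ Fin k) ⊕ Fin m) (hz : z ∈ (fC a0 k m ⁻¹' {a0} : Set _)),
        Γ.Reachable ⟨z, hz⟩ ⟨eA k m a0, rfl⟩ := by
      rintro (((x|x)|x)|x) hz
      · have hx : x = a0 := hz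
        subst hx
        exact Reachable.refl _
      · refine Reachable.trans ?_ (bstep rfl)
        exact reach_map (G := B) (H := Γ)
          (fun w => ⟨.inl (.inl (.inr w)), rfl⟩)
          (fun u v huv => Or.inr huv) (hBc.preconnected x b0)
      · exact Adj.reachable ((rfl : (Sum.inl a0 : α ⊕ β) = Sum.inl a0) :
          (glueC A B a0 b0 k m).Adj (.inl (.inr x)) (.inl (.inl (.inl a0))))
      · refine Reachable.trans ?_ (bstep rfl)
        exact Adj.reachable
          ((rfl : (Sum.inl (Sum.inr b0) : (α ⊕ β) ⊕ Fin k) = Sum.inl (Sum.inr b0)) :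
            (glueC A B a0 b0 k m).Adj (.inr x) (.inl (.inl (.inr b0))))
    exact ⟨fun u v => (key u.1 u.2).trans (key v.1 v.2).symm⟩
  · haveI : Nonempty ↥(fC a0 k m ⁻¹' {a} : Set (((α ⊕ β) ⊕ Fin k) ⊕ Fin m)) :=
      ⟨⟨eA k m a, rfl⟩⟩
    haveI : Subsingleton ↥(fC a0 k m ⁻¹' {a} : Set (((α ⊕ β) ⊕ Fin k) ⊕ Fin m)) :=
      ⟨fun u v => Subtype.ext (by
        rw [glueC_fiber_f haa u.1 u.2, glueC_fiber_f haa v.1 v.2])⟩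
    exact connected_of_subsingleton _

lemma glueC_mono_g (hAc : A.Connected) :
    PF.IsMonotone (glueC A B a0 b0 k m) (gC b0 k m) := by
  intro b
  by_cases hbb : b = b0
  · rw [hbb]
    haveI : Nonempty ↥(gC b0 k m ⁻¹' {b0} : Set (((α ⊕ β) ⊕ Fin k) ⊕ Fin m)) :=
      ⟨⟨eB k m b0, rfl⟩⟩
    set Γ := SimpleGraph.comap
      (Subtype.val : ↥(gC b0 k m ⁻¹' {b0} : Set (((α ⊕ β) ⊕ Fin k) ⊕ Fin m)) → _)
      (glueC A B a0 b0 k m) with hΓ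
    have bstep : ∀ (hz : Sum.inl (Sum.inl (Sum.inl a0)) ∈ (gC b0 k m ⁻¹' {b0} : Set _)),
        Γ.Reachable ⟨.inl (.inl (.inl a0)), hz⟩ ⟨eB k m b0, rfl⟩ :=
      fun hz => Adj.reachable ((⟨rfl, rfl⟩ : a0 = a0 ∧ b0 = b0) :
        (glueC A B a0 b0 k m).Adj (.inl (.inl (.inl a0))) (.inl (.inl (.inr b0))))
    have key : ∀ (z : ((α ⊕ β) ⊕ Fin k) ⊕ Fin m) (hz : z ∈ (gC b0 k m ⁻¹' {b0} : Set _)),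
        Γ.Reachable ⟨z, hz⟩ ⟨eB k m b0, rfl⟩ := by
      rintro (((x|x)|x)|x) hz
      · refine Reachable.trans ?_ (bstep rfl)
        exact reach_map (G := A) (H := Γ)
          (fun w => ⟨.inl (.inl (.inl w)), rfl⟩)
          (fun u v huv => Or.inr huv) (hAc.preconnected x a0)
      · have hx : x = b0 := hz
        subst hx
        exact Reachable.refl _
      · refine Reachable.trans ?_ (bstep rfl)
        exact Adj.reachable ((rfl : (Sum.inl a0 : α ⊕ β) = Sum.inl a0) :
          (glueC A B a0 b0 k m).Adj (.inl (.inr x)) (.inl (.inl (.inl a0))))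
      · exact Adj.reachable
          ((rfl : (Sum.inl (Sum.inr b0) : (α ⊕ β) ⊕ Fin k) = Sum.inl (Sum.inr b0)) :
            (glueC A B a0 b0 k m).Adj (.inr x) (.inl (.inl (.inr b0))))
    exact ⟨fun u v => (key u.1 u.2).trans (key v.1 v.2).symm⟩
  · haveI : Nonempty ↥(gC b0 k m ⁻¹' {b} : Set (((α ⊕ β) ⊕ Fin k) ⊕ Fin m)) :=
      ⟨⟨eB k m b, rfl⟩⟩
    haveI : Subsingleton ↥(gC b0 k m ⁻¹' {b} : Set (((α ⊕ β) ⊕ Fin k) ⊕ Fin m)) :=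
      ⟨fun u v => Subtype.ext (by
        rw [glueC_fiber_g hbb u.1 u.2, glueC_fiber_g hbb v.1 v.2])⟩
    exact connected_of_subsingleton _

end Glue2

end JPPAux

/-- Let `P ⊆ {3,4,5,…}` be nonempty and let `A, B ∈ 𝓖_P`.  Then there exist
`C ∈ 𝓖_P` and coherent epimorphisms `f : C → A` and `g : C → B` belonging to `𝓖_P`
(the joint projection property for `𝓖_P`). -/
theorem jointProjection_G {α β : Type} [Fintype α] [Fintype β]
    (P : Set ℕ∞) (hP : ∀ p ∈ P, 3 ≤ p ∧ p ≠ ⊤) (hPne : P.Nonempty)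
    (A : SimpleGraph α) (B : SimpleGraph β)
    (hA : PF.MemG P A) (hB : PF.MemG P B) :
    ∃ (γ : Type) (_ : Fintype γ) (C : SimpleGraph γ) (f : γ → α) (g : γ → β),
      PF.MemG P C ∧ PF.EpiG A C f ∧ PF.EpiG B C g := by
  classical
  obtain ⟨p, hpP⟩ := hPne
  obtain ⟨hp3, hpT⟩ := hP p hpP
  obtain ⟨a0, ha0⟩ := JPPAux.exists_leaf A hA.1
  obtain ⟨b0, hb0⟩ := JPPAux.exists_leaf B hB.1
  set q : ℕ := p.toNat with hqdef
  have hq : (q : ℕ∞) = p := ENat.coe_toNat hpT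
  have hq3 : 3 ≤ q := by
    rw [← hq] at hp3
    exact_mod_cast hp3
  set k := q - 1 - PF.ord A a0 with hkdef
  set m := q - 1 - PF.ord B b0 with hmdef
  have hqP : ((q : ℕ) : ℕ∞) ∈ P := by rw [hq]; exact hpP
  refine ⟨((α ⊕ β) ⊕ Fin k) ⊕ Fin m, inferInstance,
    JPPAux.glueC A B a0 b0 k m, JPPAux.fC a0 k m, JPPAux.gC b0 k m, ?_, ?_, ?_⟩
  · refine ⟨JPPAux.glueC_isTree hA.1 hB.1, ?_⟩
    rintro (((x|x)|x)|x)
    · show PF.ord (JPPAux.glueC A B a0 b0 k m) (JPPAux.eA k m x) ≤ 1 ∨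
        (PF.ord (JPPAux.glueC A B a0 b0 k m) (JPPAux.eA k m x) : ℕ∞) ∈ P
      by_cases hx : x = a0
      · rw [hx, JPPAux.glueC_ord_a0]
        right
        have harith : PF.ord A a0 + 1 + k = q := by omega
        rw [harith]
        exact hqP
      · rw [JPPAux.glueC_ord_a hx]
        exact hA.2 x
    · show PF.ord (JPPAux.glueC A B a0 b0 k m) (JPPAux.eB k m x) ≤ 1 ∨
        (PF.ord (JPPAux.glueC A B a0 b0 k m) (JPPAux.eB k m x) : ℕ∞) ∈ P
      by_cases hx : x = b0
      · rw [hx, JPPAux.glueC_ord_b0]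
        right
        have harith : PF.ord B b0 + 1 + m = q := by omega
        rw [harith]
        exact hqP
      · rw [JPPAux.glueC_ord_b hx]
        exact hB.2 x
    · rw [JPPAux.glueC_ord_k x]
      exact Or.inl le_rfl
    · rw [JPPAux.glueC_ord_m x]
      exact Or.inl le_rfl
  · refine JPPAux.epiG_of (JPPAux.fC a0 k m) (JPPAux.eA k m)
      (fun a => rfl) (fun a a' => Iff.rfl) JPPAux.glueC_h3_f
      (JPPAux.glueC_mono_f hB.1.1) ?_ ?_
    · intro a ha3
      have hne : a ≠ a0 := fun h => by rw [h] at ha3; omega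
      exact JPPAux.glueC_ord_a hne
    · intro a ha3 z hz
      have hne : a ≠ a0 := fun h => by rw [h] at ha3; omega
      exact JPPAux.glueC_fiber_f hne z hz
  · refine JPPAux.epiG_of (JPPAux.gC b0 k m) (JPPAux.eB k m)
      (fun b => rfl) (fun b b' => Iff.rfl) JPPAux.glueC_h3_g
      (JPPAux.glueC_mono_g hA.1.1) ?_ ?_
    · intro b hb3
      have hne : b ≠ b0 := fun h => by rw [h] at hb3; omega
      exact JPPAux.glueC_ord_b hne
    · intro b hb3 z hz
      have hne : b ≠ b0 := fun h => by rw [h] at hb3; omega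
      exact JPPAux.glueC_fiber_g hne z hz
end

section
/- Let 𝒯 be a projective Fraïssé family of finite graphs that allows splitting edges, and let 𝔾 be its projective Fraïssé limit. Then the edge relation of 𝔾 is an equivalence relation (𝔾 is a prespace); in fact every vertex of 𝔾 is edge-related to at most one other vertex. -/
open SimpleGraph

section Aux

open PF

lemma splitMap_eq_castSucc {k : ℕ} (c : Fin k) (v : Fin (k + 1)) (w : Fin k)
    (h : splitMap c v = w) (hw : w ≠ c) : v = w.castSucc := by
  induction v using Fin.lastCases with
  | last =>
    exfalso; apply hw
    rw [← h]; simp [splitMap]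
  | cast u =>
    have : u = w := by rw [← h]; simp [splitMap]
    rw [this]

lemma splitGraph_not_adj_ab {k : ℕ} (A : SimpleGraph (Fin k)) (a b : Fin k) :
    ¬ (splitGraph A a b).Adj a.castSucc b.castSucc := by
  intro h
  rw [splitGraph, SimpleGraph.fromRel_adj] at h
  obtain ⟨-, h | h⟩ := h
  · rcases h with ⟨x', y', hx, hy, -, h1, h2⟩ | ⟨h, -⟩
    · have hxa : x' = a := Fin.castSucc_injective _ hx.symm
      have hyb : y' = b := Fin.castSucc_injective _ hy.symm
      exact h1 ⟨hxa, hyb⟩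
    · exact absurd h (Fin.castSucc_lt_last a).ne
  · rcases h with ⟨x', y', hx, hy, -, h1, h2⟩ | ⟨h, -⟩
    · have hxb : x' = b := Fin.castSucc_injective _ hx.symm
      have hya : y' = a := Fin.castSucc_injective _ hy.symm
      exact h2 ⟨hxb, hya⟩
    · exact absurd h (Fin.castSucc_lt_last b).ne

lemma splitGraph_adj_last {k : ℕ} (A : SimpleGraph (Fin k)) (a b w : Fin k)
    (h : (splitGraph A a b).Adj (Fin.last k) w.castSucc) : w = a ∨ w = b := by
  rw [splitGraph, SimpleGraph.fromRel_adj] at h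
  obtain ⟨-, h | h⟩ := h
  · rcases h with ⟨x', y', hx, -, -⟩ | ⟨-, h⟩
    · exact absurd hx.symm (Fin.castSucc_lt_last x').ne
    · rcases h with h | h
      · exact Or.inl (Fin.castSucc_injective _ h)
      · exact Or.inr (Fin.castSucc_injective _ h)
  · rcases h with ⟨x', y', -, hy, -⟩ | ⟨h, -⟩
    · exact ((Fin.castSucc_lt_last y').ne' hy).elim
    · exact absurd h (Fin.castSucc_lt_last w).ne

lemma limit_ne_coord {T : PF.Family} {S : PF.FSeq T} {x y : PF.Limit S}
    (h : x ≠ y) : ∃ n, x.1 n ≠ y.1 n := by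
  by_contra hc
  push_neg at hc
  exact h (Subtype.ext (funext hc))

lemma edgeRel_unique_aux (T : PF.Family) (hT : PF.IsPFF T)
    (hsplit : PF.AllowsSplitting T)
    (S : PF.FSeq T) (hS : PF.IsFraisseSeq T S) :
    ∀ x y z : PF.Limit S, y ≠ x → z ≠ x →
      PF.EdgeRel S x y → PF.EdgeRel S x z → y = z := by
  intro x y z hyx hzx hxy hxz
  by_contra hyz
  obtain ⟨n1, hn1⟩ := limit_ne_coord (Ne.symm hyx)
  obtain ⟨n2, hn2⟩ := limit_ne_coord (Ne.symm hzx)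
  obtain ⟨n3, hn3⟩ := limit_ne_coord hyz
  set m := max (max n1 n2) n3 with hm
  have hm1 : n1 ≤ m := le_trans (le_max_left _ _) (le_max_left _ _)
  have hm2 : n2 ≤ m := le_trans (le_max_right _ _) (le_max_left _ _)
  have hm3 : n3 ≤ m := le_max_right _ _
  have hxym : x.1 m ≠ y.1 m := fun h => hn1 (by rw [← x.2 m n1 hm1, ← y.2 m n1 hm1, h])
  have hxzm : x.1 m ≠ z.1 m := fun h => hn2 (by rw [← x.2 m n2 hm2, ← z.2 m n2 hm2, h])
  have hyzm : y.1 m ≠ z.1 m := fun h => hn3 (by rw [← y.2 m n3 hm3, ← z.2 m n3 hm3, h])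
  have hadjm : (S.F m).graph.Adj (x.1 m) (y.1 m) := (hxy m).resolve_left hxym
  have hobj : T.obj (S.F m) := (hT.mor_obj _ _ _ (S.bond_mor m m le_rfl)).1
  obtain ⟨-, hmorA, -⟩ := hsplit (S.F m) (x.1 m) (y.1 m) hobj hadjm
  obtain ⟨l, hml, g, hg, hcomm⟩ := hS.extend m _ _ hmorA
  have hepi := hT.mor_epi _ _ _ hg
  have hgx : splitMap (x.1 m) (g (x.1 l)) = x.1 m := by
    have := congrFun hcomm (x.1 l)
    simp only [Function.comp_apply] at this
    rw [this, x.2 l m hml]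
  have hgy : g (y.1 l) = (y.1 m).castSucc := by
    apply splitMap_eq_castSucc (x.1 m) _ _ _ (Ne.symm hxym)
    have := congrFun hcomm (y.1 l)
    simp only [Function.comp_apply] at this
    rw [this, y.2 l m hml]
  have hgz : g (z.1 l) = (z.1 m).castSucc := by
    apply splitMap_eq_castSucc (x.1 m) _ _ _ (Ne.symm hxzm)
    have := congrFun hcomm (z.1 l)
    simp only [Function.comp_apply] at this
    rw [this, z.2 l m hml]
  have hxyl : x.1 l ≠ y.1 l := fun h => hxym (by rw [← x.2 l m hml, ← y.2 l m hml, h])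
  have hxzl : x.1 l ≠ z.1 l := fun h => hxzm (by rw [← x.2 l m hml, ← z.2 l m hml, h])
  have hadjly : (S.F l).graph.Adj (x.1 l) (y.1 l) := (hxy l).resolve_left hxyl
  have hadjlz : (S.F l).graph.Adj (x.1 l) (z.1 l) := (hxz l).resolve_left hxzl
  -- g (x.1 l) is either the new vertex `last` or `(x.1 m).castSucc`
  rcases Fin.eq_castSucc_or_eq_last (g (x.1 l)) with ⟨u, hgxl⟩ | hgxl
  · -- g (x.1 l) = u.castSucc, with u = x.1 m
    have hu : u = x.1 m := by
      have := hgx; rw [hgxl] at this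
      simpa [splitMap] using this
    have hne : g (x.1 l) ≠ g (y.1 l) := by
      rw [hgxl, hgy, hu]
      exact fun h => hxym (Fin.castSucc_injective _ h)
    have hadj : (splitGraph (S.F m).graph (x.1 m) (y.1 m)).Adj (g (x.1 l)) (g (y.1 l)) :=
      (hepi.2 _ _).mpr ⟨hne, x.1 l, y.1 l, rfl, rfl, hadjly⟩
    rw [hgxl, hgy, hu] at hadj
    exact splitGraph_not_adj_ab _ _ _ hadj
  · -- g (x.1 l) = last
    -- then the split vertex is adjacent to z.1 m, contradiction
    have hne : g (x.1 l) ≠ g (z.1 l) := by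
      rw [hgxl, hgz]
      exact (Ne.symm (Fin.castSucc_lt_last (z.1 m)).ne)
    have hadj : (splitGraph (S.F m).graph (x.1 m) (y.1 m)).Adj (g (x.1 l)) (g (z.1 l)) :=
      (hepi.2 _ _).mpr ⟨hne, x.1 l, z.1 l, rfl, rfl, hadjlz⟩
    rw [hgxl, hgz] at hadj
    rcases splitGraph_adj_last _ _ _ _ hadj with h | h
    · exact hxzm h.symm
    · exact hyzm h.symm

end Aux


/-- Let `𝒯` be a projective Fraïssé family of finite graphs that allows
splitting edges, and let `𝔾` be its projective Fraïssé limit.  Then the edge relation of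
`𝔾` is an equivalence relation (`𝔾` is a prespace); in fact every vertex of `𝔾` is
edge-related to at most one other vertex. -/
theorem edgeRel_equivalence_of_allowsSplitting (T : PF.Family) (hT : PF.IsPFF T)
    (hsplit : PF.AllowsSplitting T)
    (S : PF.FSeq T) (hS : PF.IsFraisseSeq T S) :
    Equivalence (PF.EdgeRel S) ∧
      ∀ x y z : PF.Limit S, y ≠ x → z ≠ x →
        PF.EdgeRel S x y → PF.EdgeRel S x z → y = z := by
  have key := edgeRel_unique_aux T hT hsplit S hS
  refine ⟨⟨fun x n => Or.inl rfl, ?_, ?_⟩, key⟩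
  · intro x y h n
    exact (h n).imp Eq.symm SimpleGraph.Adj.symm
  · intro x y z hxy hyz
    by_cases hxy' : x = y
    · rwa [hxy']
    by_cases hyz' : y = z
    · rwa [← hyz']
    have hsymm : PF.EdgeRel S y x := fun n => (hxy n).imp Eq.symm SimpleGraph.Adj.symm
    have : x = z := key y x z hxy' (Ne.symm hyz') hsymm hyz
    rw [this]
    exact fun n => Or.inl rfl
end
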